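/- arXiv:2507.12285 — 3 statements merged into one kernel-verified Lean document; each statement's English description precedes it below -/
import Mathlib

section
/- Weighted L² control by the conformal energy: There is a universal constant C > 0 such that for all 2 ≤ s₀ ≤ s₁, every smooth function u defined on K_{[s₀,s₁]} vanishing on a neighborhood of the boundary {r = t−1}, every s ∈ [s₀,s₁] and every α ∈ {0,1,2,3}: ‖s (s/t)² ∂_α u‖_{L²_f(H_s)} + ‖(s/t) u‖_{L²_f(H_s)} ≤ C · E_con(s,u)^{1/2}, where the weights s/t are evaluated on H_s, i.e. (s/t)(x) = s/√(s²+|x|²). -/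
noncomputable section
open MeasureTheory

/-- Spatial radius `r = |x|` of a space-time point `p = (t, x) ∈ ℝ^{1+3}`. -/
def rad (p : Fin 4 → ℝ) : ℝ := Real.sqrt (∑ a : Fin 3, (p a.succ) ^ 2)

/-- Partial derivative in the `i`-th coordinate direction (`0` is time). -/
def pd (i : Fin 4) (u : (Fin 4 → ℝ) → ℝ) : (Fin 4 → ℝ) → ℝ :=
  fun p => fderiv ℝ u p (Pi.single i 1)

/-- The flat wave operator `□u = ∂_t∂_t u - Σ_a ∂_a∂_a u`. -/
def box (u : (Fin 4 → ℝ) → ℝ) : (Fin 4 → ℝ) → ℝ :=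
  fun p => pd 0 (pd 0 u) p - ∑ a : Fin 3, pd a.succ (pd a.succ u) p

/-- The point of the hyperboloid `H_s` above `x ∈ ℝ³`: `(√(s² + |x|²), x)`. -/
def hpt (s : ℝ) (x : Fin 3 → ℝ) : Fin 4 → ℝ :=
  Fin.cons (Real.sqrt (s ^ 2 + ∑ a : Fin 3, (x a) ^ 2)) x

/-- The flat `L²` norm on the hyperboloid `H_s`:
`‖w‖_{L²_f(H_s)} = (∫_{ℝ³} |w(√(s²+|x|²), x)|² dx)^{1/2}`. -/
def L2f (s : ℝ) (w : (Fin 4 → ℝ) → ℝ) : ℝ :=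
  Real.sqrt (∫ x : Fin 3 → ℝ, (w (hpt s x)) ^ 2)

/-- The region `K_{[s₀,s₁]} = {(t,x) : s₀² ≤ t² - r² ≤ s₁², r < t - 1}`. -/
def Kset (s₀ s₁ : ℝ) : Set (Fin 4 → ℝ) :=
  {p | s₀ ^ 2 ≤ (p 0) ^ 2 - (rad p) ^ 2 ∧ (p 0) ^ 2 - (rad p) ^ 2 ≤ s₁ ^ 2 ∧ rad p < p 0 - 1}

/-- `u` vanishes on a neighborhood of the boundary `{r = t - 1}` (and outside the cone). -/
def vanishNearBdry (u : (Fin 4 → ℝ) → ℝ) : Prop :=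
  ∃ δ > 0, ∀ p : Fin 4 → ℝ, p 0 - 1 - δ ≤ rad p → u p = 0

/-- The standard hyperboloidal energy `E_c(s,u)`. -/
def Ec (c s : ℝ) (u : (Fin 4 → ℝ) → ℝ) : ℝ :=
  ∫ x : Fin 3 → ℝ,
    ((pd 0 u (hpt s x)) ^ 2 + (∑ a : Fin 3, (pd a.succ u (hpt s x)) ^ 2)
      + 2 * (∑ a : Fin 3, (x a / hpt s x 0) * pd 0 u (hpt s x) * pd a.succ u (hpt s x))
      + c ^ 2 * (u (hpt s x)) ^ 2)

/-- The semi-hyperboloidal derivative `∂̲_a u = (x^a/t) ∂_t u + ∂_a u`. -/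
def sdu (a : Fin 3) (u : (Fin 4 → ℝ) → ℝ) : (Fin 4 → ℝ) → ℝ :=
  fun p => (p a.succ / p 0) * pd 0 u p + pd a.succ u p

/-- `Ku = s(s/t) ∂_t u + 2 Σ_a x^a ∂̲_a u`, with `s = √(t² - r²)`. -/
def Kop (u : (Fin 4 → ℝ) → ℝ) : (Fin 4 → ℝ) → ℝ :=
  fun p =>
    Real.sqrt ((p 0) ^ 2 - (rad p) ^ 2) * (Real.sqrt ((p 0) ^ 2 - (rad p) ^ 2) / p 0)
        * pd 0 u p
      + 2 * ∑ a : Fin 3, p a.succ * sdu a u p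

/-- The hyperboloidal conformal energy `E_con(s,u)`. -/
def Econ (s : ℝ) (u : (Fin 4 → ℝ) → ℝ) : ℝ :=
  ∫ x : Fin 3 → ℝ,
    ((Kop u (hpt s x) + 2 * u (hpt s x)) ^ 2
      + ∑ a : Fin 3, (s * sdu a u (hpt s x)) ^ 2)

namespace Stmt3

lemma integrable_add' {f g : (Fin 3 → ℝ) → ℝ} (hf : Integrable f volume)
    (hg : Integrable g volume) : Integrable (fun x => f x + g x) volume := hf.add hg

lemma integrable_sub' {f g : (Fin 3 → ℝ) → ℝ} (hf : Integrable f volume)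
    (hg : Integrable g volume) : Integrable (fun x => f x - g x) volume := hf.sub hg

lemma integral_add' {f g : (Fin 3 → ℝ) → ℝ} (hf : Integrable f volume)
    (hg : Integrable g volume) :
    ∫ x, (f x + g x) = (∫ x, f x) + ∫ x, g x := integral_add hf hg

lemma integral_sub' {f g : (Fin 3 → ℝ) → ℝ} (hf : Integrable f volume)
    (hg : Integrable g volume) :
    ∫ x, (f x - g x) = (∫ x, f x) - ∫ x, g x := integral_sub hf hg

lemma integral_cmul (c : ℝ) (f : (Fin 3 → ℝ) → ℝ) :
    ∫ x, c * f x = c * ∫ x, f x := by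
  simpa [smul_eq_mul] using integral_smul c f

/-- Continuous and vanishing outside the ball of radius `R`. -/
def CC (R : ℝ) (f : (Fin 3 → ℝ) → ℝ) : Prop :=
  Continuous f ∧ ∀ x : Fin 3 → ℝ, R ≤ ‖x‖ → f x = 0

lemma CC.integrable {R : ℝ} {f : (Fin 3 → ℝ) → ℝ} (h : CC R f) : Integrable f volume := by
  refine h.1.integrable_of_hasCompactSupport (HasCompactSupport.intro
    (isCompact_closedBall (0 : Fin 3 → ℝ) R) (fun x hx => h.2 x ?_))
  rw [Metric.mem_closedBall, dist_zero_right] at hx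
  exact (not_le.mp hx).le

lemma CC.add {R : ℝ} {f g : (Fin 3 → ℝ) → ℝ} (hf : CC R f) (hg : CC R g) :
    CC R (fun x => f x + g x) :=
  ⟨hf.1.add hg.1, fun x hx => by show f x + g x = 0; rw [hf.2 x hx, hg.2 x hx, add_zero]⟩

lemma CC.mul_cont {R : ℝ} {f g : (Fin 3 → ℝ) → ℝ} (hf : CC R f) (hg : Continuous g) :
    CC R (fun x => g x * f x) :=
  ⟨hg.mul hf.1, fun x hx => by show g x * f x = 0; rw [hf.2 x hx, mul_zero]⟩

lemma CC.mul {R : ℝ} {f g : (Fin 3 → ℝ) → ℝ} (hf : CC R f) (hg : CC R g) :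
    CC R (fun x => f x * g x) :=
  ⟨hf.1.mul hg.1, fun x hx => by show f x * g x = 0; rw [hf.2 x hx, zero_mul]⟩

lemma CC.sq {R : ℝ} {f : (Fin 3 → ℝ) → ℝ} (hf : CC R f) :
    CC R (fun x => f x ^ 2) :=
  ⟨hf.1.pow 2, fun x hx => by show f x ^ 2 = 0; rw [hf.2 x hx]; ring⟩

lemma CC.const_mul {R : ℝ} {f : (Fin 3 → ℝ) → ℝ} (hf : CC R f) (c : ℝ) :
    CC R (fun x => c * f x) :=
  hf.mul_cont continuous_const

/-- Cauchy-Schwarz for integrals. -/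
lemma integral_CS {f g : (Fin 3 → ℝ) → ℝ} (hf2 : Integrable (fun x => f x ^ 2) volume)
    (hg2 : Integrable (fun x => g x ^ 2) volume)
    (hfg : Integrable (fun x => f x * g x) volume) :
    ∫ x, f x * g x ≤ Real.sqrt (∫ x, f x ^ 2) * Real.sqrt (∫ x, g x ^ 2) := by
  set A := ∫ x, f x ^ 2 with hA
  set B := ∫ x, g x ^ 2 with hB
  set I := ∫ x, f x * g x with hI
  have hA0 : 0 ≤ A := integral_nonneg fun x => sq_nonneg _
  have hB0 : 0 ≤ B := integral_nonneg fun x => sq_nonneg _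
  have key : ∀ l : ℝ, 0 ≤ l ^ 2 * A - 2 * l * I + B := by
    intro l
    have h1 : (fun x => (l * f x - g x) ^ 2)
        = fun x => (l ^ 2 * f x ^ 2 - 2 * l * (f x * g x)) + g x ^ 2 := by
      funext x; ring
    have h2 : 0 ≤ ∫ x, (l * f x - g x) ^ 2 := integral_nonneg fun x => sq_nonneg _
    rw [h1, integral_add' (integrable_sub' (hf2.const_mul _) (hfg.const_mul _)) hg2,
      integral_sub' (hf2.const_mul _) (hfg.const_mul _),
      integral_cmul, integral_cmul] at h2
    exact h2
  rcases le_or_gt I 0 with hI0 | hI0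
  · exact hI0.trans (mul_nonneg (Real.sqrt_nonneg _) (Real.sqrt_nonneg _))
  rcases eq_or_lt_of_le hA0 with hA1 | hA1
  · exfalso
    have := key ((B + 1) / (2 * I))
    rw [← hA1] at this
    have h2 : 2 * ((B + 1) / (2 * I)) * I = B + 1 := by field_simp
    nlinarith
  · have := key (I / A)
    have hIAB : I ^ 2 ≤ A * B := by
      have h2 : (I / A) ^ 2 * A = I ^ 2 / A := by field_simp
      have h3 : 2 * (I / A) * I = 2 * (I ^ 2 / A) := by ring
      rw [h2, h3] at this
      have h4 : I ^ 2 / A ≤ B := by linarith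
      calc I ^ 2 = (I ^ 2 / A) * A := by field_simp
        _ ≤ B * A := mul_le_mul_of_nonneg_right h4 hA0
        _ = A * B := mul_comm _ _
    calc I = Real.sqrt (I ^ 2) := (Real.sqrt_sq hI0.le).symm
      _ ≤ Real.sqrt (A * B) := Real.sqrt_le_sqrt hIAB
      _ = Real.sqrt A * Real.sqrt B := Real.sqrt_mul hA0 _

/-- Minkowski-type inequality. -/
lemma N_add {R : ℝ} {f g : (Fin 3 → ℝ) → ℝ} (hf : CC R f) (hg : CC R g) :
    Real.sqrt (∫ x, (f x + g x) ^ 2)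
      ≤ Real.sqrt (∫ x, f x ^ 2) + Real.sqrt (∫ x, g x ^ 2) := by
  have hf2 := hf.sq.integrable
  have hg2 := hg.sq.integrable
  have hfg := (hf.mul hg).integrable
  have hcs := integral_CS hf2 hg2 hfg
  have hexp : (fun x => (f x + g x) ^ 2)
      = fun x => (f x ^ 2 + 2 * (f x * g x)) + g x ^ 2 := by funext x; ring
  have h1 : ∫ x, (f x + g x) ^ 2
      = ((∫ x, f x ^ 2) + 2 * (∫ x, f x * g x)) + ∫ x, g x ^ 2 := by
    rw [hexp, integral_add' (integrable_add' hf2 (hfg.const_mul 2)) hg2,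
      integral_add' hf2 (hfg.const_mul 2), integral_cmul]
  have h2 : ∫ x, (f x + g x) ^ 2
      ≤ (Real.sqrt (∫ x, f x ^ 2) + Real.sqrt (∫ x, g x ^ 2)) ^ 2 := by
    have e1 : Real.sqrt (∫ x, f x ^ 2) ^ 2 = ∫ x, f x ^ 2 :=
      Real.sq_sqrt (integral_nonneg fun x => sq_nonneg _)
    have e2 : Real.sqrt (∫ x, g x ^ 2) ^ 2 = ∫ x, g x ^ 2 :=
      Real.sq_sqrt (integral_nonneg fun x => sq_nonneg _)
    nlinarith [Real.sqrt_nonneg (∫ x, f x ^ 2), Real.sqrt_nonneg (∫ x, g x ^ 2)]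
  calc Real.sqrt (∫ x, (f x + g x) ^ 2)
      ≤ Real.sqrt ((Real.sqrt (∫ x, f x ^ 2) + Real.sqrt (∫ x, g x ^ 2)) ^ 2) :=
        Real.sqrt_le_sqrt h2
    _ = _ := Real.sqrt_sq (by positivity)

/-- monotonicity of the L² seminorm. -/
lemma N_mono {R : ℝ} {f g : (Fin 3 → ℝ) → ℝ} (hf : Continuous f) (hg : CC R g)
    (hb : ∀ x, |f x| ≤ |g x|) :
    Real.sqrt (∫ x, f x ^ 2) ≤ Real.sqrt (∫ x, g x ^ 2) := by
  have hfCC : CC R f := ⟨hf, fun x hx => by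
    have := hb x; rw [hg.2 x hx, abs_zero] at this; exact abs_nonpos_iff.mp this⟩
  refine Real.sqrt_le_sqrt (integral_mono hfCC.sq.integrable hg.sq.integrable fun x => ?_)
  have := hb x
  calc f x ^ 2 = |f x| ^ 2 := (sq_abs _).symm
    _ ≤ |g x| ^ 2 := by nlinarith [abs_nonneg (f x)]
    _ = g x ^ 2 := sq_abs _

/-- pulling constants out. -/
lemma N_const_mul (c : ℝ) (f : (Fin 3 → ℝ) → ℝ) :
    Real.sqrt (∫ x, (c * f x) ^ 2) = |c| * Real.sqrt (∫ x, f x ^ 2) := by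
  have h1 : (fun x => (c * f x) ^ 2) = fun x => c ^ 2 * f x ^ 2 := by funext x; ring
  rw [h1, integral_cmul, Real.sqrt_mul (sq_nonneg c), Real.sqrt_sq_eq_abs]



def ρf (s : ℝ) (x : Fin 3 → ℝ) : ℝ := s ^ 2 + ∑ a : Fin 3, (x a) ^ 2

def Dρ (x : Fin 3 → ℝ) : (Fin 3 → ℝ) →L[ℝ] ℝ :=
  ∑ b : Fin 3, (2 * x b) • ContinuousLinearMap.proj b

def Dh (s : ℝ) (x : Fin 3 → ℝ) : (Fin 3 → ℝ) →L[ℝ] (Fin 4 → ℝ) :=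
  ContinuousLinearMap.pi (fun i =>
    Fin.cases ((1 / (2 * Real.sqrt (ρf s x))) • Dρ x)
      (fun b => ContinuousLinearMap.proj b) i)

variable {s : ℝ} {x : Fin 3 → ℝ}

lemma sum_sq_nonneg (x : Fin 3 → ℝ) : 0 ≤ ∑ a : Fin 3, (x a) ^ 2 :=
  Finset.sum_nonneg fun a _ => sq_nonneg _

lemma rho_pos (hs : 0 < s) (x : Fin 3 → ℝ) : 0 < ρf s x := by
  have := sum_sq_nonneg x; have : (0:ℝ) < s ^ 2 := by positivity
  unfold ρf; linarith [sum_sq_nonneg x]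

lemma hpt_zero (s : ℝ) (x : Fin 3 → ℝ) : hpt s x 0 = Real.sqrt (ρf s x) := rfl

lemma hpt_succ (s : ℝ) (x : Fin 3 → ℝ) (a : Fin 3) : hpt s x a.succ = x a := by
  simp [hpt]

lemma ht_pos (hs : 0 < s) : 0 < hpt s x 0 := by
  rw [hpt_zero]; exact Real.sqrt_pos.2 (rho_pos hs x)

lemma ht_sq (hs : 0 < s) : (hpt s x 0) ^ 2 = ρf s x := by
  rw [hpt_zero]; exact Real.sq_sqrt (rho_pos hs x).le

lemma hts (hs : 0 < s) : s ≤ hpt s x 0 := by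
  rw [hpt_zero]
  calc s = Real.sqrt (s ^ 2) := by rw [Real.sqrt_sq hs.le]
    _ ≤ Real.sqrt (ρf s x) := Real.sqrt_le_sqrt (by unfold ρf; linarith [sum_sq_nonneg x])

lemma rad_hpt (s : ℝ) (x : Fin 3 → ℝ) :
    rad (hpt s x) = Real.sqrt (∑ a : Fin 3, (x a) ^ 2) := by
  simp [rad, hpt]

lemma sqrt_t_sub_r (hs : 0 < s) :
    Real.sqrt ((hpt s x 0) ^ 2 - rad (hpt s x) ^ 2) = s := by
  rw [ht_sq hs, rad_hpt, Real.sq_sqrt (sum_sq_nonneg x)]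
  unfold ρf; rw [add_sub_cancel_right, Real.sqrt_sq hs.le]

lemma abs_le_t (hs : 0 < s) (a : Fin 3) : |x a| ≤ hpt s x 0 := by
  rw [hpt_zero]
  refine Real.abs_le_sqrt ?_
  unfold ρf
  have h1 : (x a) ^ 2 ≤ ∑ b : Fin 3, (x b) ^ 2 :=
    by exact Finset.single_le_sum (fun i _ => sq_nonneg (x i)) (Finset.mem_univ a)
  nlinarith

lemma hasFDerivAt_rho (s : ℝ) (x : Fin 3 → ℝ) : HasFDerivAt (ρf s) (Dρ x) x := by
  have h1 : ∀ b : Fin 3, HasFDerivAt (fun y : Fin 3 → ℝ => y b ^ 2)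
      ((2 * x b) • (ContinuousLinearMap.proj b : (Fin 3 → ℝ) →L[ℝ] ℝ)) x := by
    intro b
    have hb : HasFDerivAt (fun y : Fin 3 → ℝ => y b)
        ((ContinuousLinearMap.proj b : (Fin 3 → ℝ) →L[ℝ] ℝ)) x :=
      (ContinuousLinearMap.proj b : (Fin 3 → ℝ) →L[ℝ] ℝ).hasFDerivAt
    have h2 := hb.mul hb
    have e1 : (fun y : Fin 3 → ℝ => y b ^ 2) = (fun y => y b) * fun y => y b := by
      funext y; simp [sq]
    rw [e1, two_mul, add_smul]; exact h2
  have h3 := (HasFDerivAt.fun_sum (fun b (_ : b ∈ Finset.univ) => h1 b)).const_add (s ^ 2)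
  exact h3

lemma Dρ_apply (x y : Fin 3 → ℝ) : Dρ x y = ∑ b : Fin 3, 2 * x b * y b := by
  simp [Dρ, ContinuousLinearMap.sum_apply, ContinuousLinearMap.smul_apply,
    ContinuousLinearMap.proj_apply, smul_eq_mul]

lemma hasFDerivAt_hpt (hs : 0 < s) (x : Fin 3 → ℝ) : HasFDerivAt (hpt s) (Dh s x) x := by
  rw [hasFDerivAt_pi']
  intro i
  refine Fin.cases ?_ ?_ i
  · have hproj : (ContinuousLinearMap.proj (0 : Fin 4)).comp (Dh s x)
        = (1 / (2 * Real.sqrt (ρf s x))) • Dρ x := by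
      unfold Dh; rw [ContinuousLinearMap.proj_pi]; simp
    rw [hproj, show (fun x => hpt s x 0) = fun y => Real.sqrt (ρf s y) from rfl]
    exact (hasFDerivAt_rho s x).sqrt (rho_pos hs x).ne'
  · intro b
    have hproj : (ContinuousLinearMap.proj (b.succ : Fin 4)).comp (Dh s x)
        = ContinuousLinearMap.proj b := by
      unfold Dh; rw [ContinuousLinearMap.proj_pi]; simp
    have hfun : (fun x => hpt s x b.succ) = fun y : Fin 3 → ℝ => y b := by
      funext y; rw [hpt_succ]
    rw [hproj, hfun]
    exact (ContinuousLinearMap.proj b (R := ℝ) (φ := fun _ : Fin 3 => ℝ)).hasFDerivAt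

lemma sqrt_rho_ne (hs : 0 < s) : Real.sqrt (ρf s x) ≠ 0 :=
  (Real.sqrt_pos.2 (rho_pos hs x)).ne'

lemma Dh_apply_single (hs : 0 < s) (a : Fin 3) :
    Dh s x (Pi.single a 1)
      = (x a / Real.sqrt (ρf s x)) • (Pi.single (0 : Fin 4) 1 : Fin 4 → ℝ)
        + (Pi.single a.succ 1 : Fin 4 → ℝ) := by
  funext i
  refine Fin.cases ?_ ?_ i
  · have h1 : Dh s x (Pi.single a 1) 0
        = (1 / (2 * Real.sqrt (ρf s x))) * Dρ x (Pi.single a 1) := by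
      unfold Dh; rw [ContinuousLinearMap.pi_apply]; simp
    have h2 : Dρ x (Pi.single a 1) = 2 * x a := by
      rw [Dρ_apply]
      rw [Finset.sum_eq_single a]
      · simp
      · intro b _ hb; simp [Pi.single_apply, hb]
      · intro h; exact absurd (Finset.mem_univ a) h
    rw [h1, h2]
    have h3 : (Pi.single a.succ (1:ℝ) : Fin 4 → ℝ) 0 = 0 := by
      simp [Pi.single_apply, (Fin.succ_ne_zero a)]
    simp only [Pi.add_apply, Pi.smul_apply, Pi.single_eq_same, smul_eq_mul, h3]
    rw [mul_comm (1 / (2 * Real.sqrt (ρf s x))) (2 * x a)]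
    rw [mul_one_div, mul_div_mul_left _ _ (two_ne_zero), mul_one, add_zero]
  · intro c
    have h1 : Dh s x (Pi.single a 1) c.succ = (Pi.single a (1:ℝ) : Fin 3 → ℝ) c := by
      unfold Dh; rw [ContinuousLinearMap.pi_apply]; simp
    rw [h1]
    have h3 : (Pi.single (0 : Fin 4) (1:ℝ) : Fin 4 → ℝ) c.succ = 0 := by
      simp [Pi.single_apply, (Fin.succ_ne_zero c).symm]
    simp only [Pi.add_apply, Pi.smul_apply, h3, smul_eq_mul, mul_zero, zero_add]
    by_cases hac : a = c
    · subst hac; simp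
    · rw [Pi.single_apply, Pi.single_apply]
      simp [hac, fun h => hac (Fin.succ_injective 3 h)]

lemma hasFDerivAt_V {u : (Fin 4 → ℝ) → ℝ} (hu : ContDiff ℝ (⊤ : ℕ∞) u) (hs : 0 < s)
    (x : Fin 3 → ℝ) :
    HasFDerivAt (fun y => u (hpt s y)) ((fderiv ℝ u (hpt s x)).comp (Dh s x)) x :=
  ((hu.differentiable (by simp) (hpt s x)).hasFDerivAt).comp x (hasFDerivAt_hpt hs x)

lemma fderiv_comp_hpt {u : (Fin 4 → ℝ) → ℝ} (hu : ContDiff ℝ (⊤ : ℕ∞) u) (hs : 0 < s)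
    (x : Fin 3 → ℝ) (a : Fin 3) :
    fderiv ℝ (fun y => u (hpt s y)) x (Pi.single a 1) = sdu a u (hpt s x) := by
  rw [(hasFDerivAt_V hu hs x).fderiv]
  rw [ContinuousLinearMap.comp_apply, Dh_apply_single hs, map_add,
    ContinuousLinearMap.map_smul]
  unfold sdu pd
  rw [hpt_succ, hpt_zero]
  simp [smul_eq_mul]

lemma contDiff_hpt (hs : 0 < s) : ContDiff ℝ (⊤ : ℕ∞) (hpt s) := by
  refine contDiff_pi.2 fun i => ?_
  refine Fin.cases ?_ ?_ i
  · rw [show (fun x => hpt s x 0) = fun y => Real.sqrt (ρf s y) from rfl]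
    refine ContDiff.sqrt ?_ fun y => (rho_pos hs y).ne'
    refine contDiff_const.add (ContDiff.sum fun b _ => ?_)
    exact ((ContinuousLinearMap.proj b : (Fin 3 → ℝ) →L[ℝ] ℝ).contDiff).pow 2
  · intro b
    rw [show (fun x => hpt s x b.succ) = fun y : Fin 3 → ℝ => y b from by
      funext y; rw [hpt_succ]]
    exact (ContinuousLinearMap.proj b : (Fin 3 → ℝ) →L[ℝ] ℝ).contDiff

lemma cont_pd {u : (Fin 4 → ℝ) → ℝ} (hu : ContDiff ℝ (⊤ : ℕ∞) u) (i : Fin 4) :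
    Continuous (pd i u) :=
  (hu.continuous_fderiv (by simp)).clm_apply continuous_const

lemma cont_hpt (hs : 0 < s) : Continuous (hpt s) := (contDiff_hpt hs).continuous

lemma cont_rho (s : ℝ) : Continuous (ρf s) :=
  continuous_const.add (continuous_finset_sum _ fun b _ => (continuous_apply b).pow 2)

lemma cont_T (hs : 0 < s) : Continuous (fun x : Fin 3 → ℝ => hpt s x 0) :=
  (continuous_apply 0).comp (cont_hpt hs)

lemma cont_rad : Continuous rad :=
  Real.continuous_sqrt.comp (continuous_finset_sum _ fun a _ => (continuous_apply a.succ).pow 2)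

/-- All relevant quantities vanish far out on the hyperboloid. -/
lemma vanish {u : (Fin 4 → ℝ) → ℝ} {δ : ℝ} (hδ : 0 < δ)
    (hvan : ∀ p : Fin 4 → ℝ, p 0 - 1 - δ ≤ rad p → u p = 0) (hs : 2 ≤ s)
    (x : Fin 3 → ℝ) (hx : s ^ 2 ≤ ‖x‖) :
    u (hpt s x) = 0 ∧ ∀ i, pd i u (hpt s x) = 0 := by
  have hs0 : (0:ℝ) < s := by linarith
  set U : Set (Fin 4 → ℝ) := {p | p 0 - 1 - δ < rad p} with hU
  have hUopen : IsOpen U :=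
    isOpen_lt (((continuous_apply 0).sub continuous_const).sub continuous_const) cont_rad
  have hmem : hpt s x ∈ U := by
    have hxr : ‖x‖ ≤ Real.sqrt (∑ a : Fin 3, (x a) ^ 2) := by
      refine (pi_norm_le_iff_of_nonneg (Real.sqrt_nonneg _)).2 fun a => ?_
      refine Real.abs_le_sqrt ?_
      exact Finset.single_le_sum (fun i _ => sq_nonneg (x i)) (Finset.mem_univ a)
    set r := Real.sqrt (∑ a : Fin 3, (x a) ^ 2) with hr
    have hrs : s ^ 2 ≤ r := le_trans hx hxr
    have hrpos : 0 < r := lt_of_lt_of_le (by positivity) hrs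
    have hTlt : hpt s x 0 < r + 1 := by
      rw [hpt_zero]
      have h1 : ρf s x < (r + 1) ^ 2 := by
        have hr2 : r ^ 2 = ∑ a : Fin 3, (x a) ^ 2 := Real.sq_sqrt (sum_sq_nonneg x)
        have : s ^ 2 ≤ r := hrs
        unfold ρf; nlinarith
      calc Real.sqrt (ρf s x) < Real.sqrt ((r + 1) ^ 2) :=
            Real.sqrt_lt_sqrt (rho_pos hs0 x).le h1
        _ = r + 1 := Real.sqrt_sq (by positivity)
    show hpt s x 0 - 1 - δ < rad (hpt s x)
    rw [rad_hpt]
    linarith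
  constructor
  · exact hvan _ (le_of_lt hmem)
  · intro i
    have hev : u =ᶠ[nhds (hpt s x)] (fun _ => 0) := by
      filter_upwards [hUopen.mem_nhds hmem] with q hq
      exact hvan q (le_of_lt hq)
    unfold pd
    rw [hev.fderiv_eq, fderiv_fun_const]
    simp



lemma Dρ_single (x : Fin 3 → ℝ) (a : Fin 3) : Dρ x (Pi.single a 1) = 2 * x a := by
  rw [Dρ_apply, Finset.sum_eq_single a]
  · simp
  · intro b _ hb; simp [Pi.single_apply, hb]
  · intro h; exact absurd (Finset.mem_univ a) h

/-- The Hardy-type inequality on `ℝ³` with weight `1/(s² + r²)`. -/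
lemma hardy {s : ℝ} (hs : 0 < s) (R : ℝ) (v : (Fin 3 → ℝ) → ℝ) (hv : ContDiff ℝ (⊤ : ℕ∞) v)
    (h0 : ∀ x, R ≤ ‖x‖ → v x = 0) :
    Real.sqrt (∫ x, (v x) ^ 2 / ρf s x)
      ≤ 2 * ∑ a : Fin 3, Real.sqrt (∫ x, (fderiv ℝ v x (Pi.single a 1)) ^ 2) := by
  have hρ : ∀ x, 0 < ρf s x := rho_pos hs
  set G : Fin 3 → (Fin 3 → ℝ) → ℝ := fun a x => fderiv ℝ v x (Pi.single a 1) with hG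
  have hGcont : ∀ a, Continuous (G a) :=
    fun a => (hv.continuous_fderiv (by simp)).clm_apply continuous_const
  have hG0 : ∀ a x, R + 1 ≤ ‖x‖ → G a x = 0 := by
    intro a x hx
    have hev : v =ᶠ[nhds x] (fun _ => 0) := by
      filter_upwards [(isOpen_lt continuous_const continuous_norm).mem_nhds
        (show R < ‖x‖ by linarith)] with q hq
      exact h0 q hq.le
    show fderiv ℝ v x (Pi.single a 1) = 0
    rw [hev.fderiv_eq, fderiv_fun_const]; simp
  have hCCv : CC (R + 1) v := ⟨hv.continuous, fun x hx => h0 x (by linarith)⟩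
  have hCCG : ∀ a, CC (R + 1) (G a) := fun a => ⟨hGcont a, hG0 a⟩
  have hsq : ∀ x, Real.sqrt (ρf s x) ≠ 0 := fun x => (Real.sqrt_pos.2 (hρ x)).ne'
  have hrinv : Continuous (fun x => (ρf s x)⁻¹) := (cont_rho s).inv₀ fun x => (hρ x).ne'
  have hrinv2 : Continuous (fun x => ((ρf s x) ^ 2)⁻¹) :=
    ((cont_rho s).pow 2).inv₀ fun x => (pow_pos (hρ x) 2).ne'
  -- the three main families of functions
  set w : Fin 3 → (Fin 3 → ℝ) → ℝ :=
    fun a x => (ρf s x)⁻¹ - 2 * (x a) ^ 2 * ((ρf s x) ^ 2)⁻¹ with hw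
  have hwcont : ∀ a, Continuous (w a) := by
    intro a
    exact hrinv.sub ((continuous_const.mul ((continuous_apply a).pow 2)).mul hrinv2)
  -- derivative facts
  have hv2 : ∀ x, HasFDerivAt (fun y => v y ^ 2) ((2 * v x) • fderiv ℝ v x) x := by
    intro x
    have hd := (hv.differentiable (by simp) x).hasFDerivAt
    have h2 := hd.mul hd
    have e1 : (fun y => v y ^ 2) = v * v := by
      funext y; simp [sq]
    rw [e1, two_mul, add_smul]; exact h2
  have hinvD : ∀ x, HasFDerivAt (fun y => (ρf s y)⁻¹)
      ((-((ρf s x) ^ 2)⁻¹) • Dρ x) x := by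
    intro x
    exact (hasDerivAt_inv (hρ x).ne').comp_hasFDerivAt x (hasFDerivAt_rho s x)
  have hWD : ∀ (a : Fin 3) (x : Fin 3 → ℝ), HasFDerivAt (fun y => y a * (ρf s y)⁻¹)
      (x a • ((-((ρf s x) ^ 2)⁻¹) • Dρ x)
        + (ρf s x)⁻¹ • (ContinuousLinearMap.proj a : (Fin 3 → ℝ) →L[ℝ] ℝ)) x := by
    intro a x
    have hb : HasFDerivAt (fun y : Fin 3 → ℝ => y a)
        ((ContinuousLinearMap.proj a : (Fin 3 → ℝ) →L[ℝ] ℝ)) x :=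
      (ContinuousLinearMap.proj a : (Fin 3 → ℝ) →L[ℝ] ℝ).hasFDerivAt
    exact hb.mul (hinvD x)
  -- evaluations
  have hWeval : ∀ (a : Fin 3) (x : Fin 3 → ℝ),
      (x a • ((-((ρf s x) ^ 2)⁻¹) • Dρ x)
        + (ρf s x)⁻¹ • (ContinuousLinearMap.proj a : (Fin 3 → ℝ) →L[ℝ] ℝ))
        (Pi.single a 1) = w a x := by
    intro a x
    simp only [ContinuousLinearMap.add_apply, ContinuousLinearMap.smul_apply,
      ContinuousLinearMap.proj_apply, Dρ_single, Pi.single_eq_same, smul_eq_mul, hw]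
    ring
  have hgeval : ∀ (a : Fin 3) (x : Fin 3 → ℝ),
      ((2 * v x) • fderiv ℝ v x) (Pi.single a 1) = 2 * v x * G a x := by
    intro a x
    simp only [ContinuousLinearMap.smul_apply, smul_eq_mul, hG]
  -- integration by parts
  have ibp : ∀ a : Fin 3,
      ∫ x, w a x * v x ^ 2 = - ∫ x, (x a * (ρf s x)⁻¹) * (2 * v x * G a x) := by
    intro a
    have hWa : CC (R + 1) (fun x => (x a * (ρf s x)⁻¹) * (2 * v x * G a x)) := by
      have := ((hCCv.const_mul 2).mul (hCCG a)).mul_cont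
        ((continuous_apply a).mul hrinv)
      exact ⟨this.1, this.2⟩
    have hWb : CC (R + 1) (fun x => w a x * v x ^ 2) :=
      hCCv.sq.mul_cont (hwcont a)
    have hWc : CC (R + 1) (fun x => (x a * (ρf s x)⁻¹) * v x ^ 2) :=
      hCCv.sq.mul_cont ((continuous_apply a).mul hrinv)
    have h := integral_bilinear_hasFDerivAt_right_eq_neg_left_of_integrable
      (μ := volume) (B := ContinuousLinearMap.mul ℝ ℝ) (v := Pi.single a 1)
      (f := fun x => x a * (ρf s x)⁻¹)
      (f' := fun x => x a • ((-((ρf s x) ^ 2)⁻¹) • Dρ x)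
        + (ρf s x)⁻¹ • (ContinuousLinearMap.proj a : (Fin 3 → ℝ) →L[ℝ] ℝ))
      (g := fun x => v x ^ 2)
      (g' := fun x => (2 * v x) • fderiv ℝ v x)
      ?_ ?_ ?_ (fun x _ => hWD a x) (fun x _ => hv2 x)
    · -- h : ∫ f x * g' x e = - ∫ f' x e * g x ; we want the symmetric version
      have e1 : (fun x => (ContinuousLinearMap.mul ℝ ℝ) (x a * (ρf s x)⁻¹)
          (((2 * v x) • fderiv ℝ v x) (Pi.single a 1)))
          = fun x => (x a * (ρf s x)⁻¹) * (2 * v x * G a x) := by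
        funext x; rw [ContinuousLinearMap.mul_apply', hgeval]
      have e2 : (fun x => (ContinuousLinearMap.mul ℝ ℝ)
          ((x a • ((-((ρf s x) ^ 2)⁻¹) • Dρ x)
            + (ρf s x)⁻¹ • (ContinuousLinearMap.proj a : (Fin 3 → ℝ) →L[ℝ] ℝ))
          (Pi.single a 1)) (v x ^ 2))
          = fun x => w a x * v x ^ 2 := by
        funext x; rw [ContinuousLinearMap.mul_apply', hWeval]
      rw [e1, e2] at h
      linarith [h]
    · -- Integrable (fun x => mul (f' x e) (g x))
      have e2 : (fun x => (ContinuousLinearMap.mul ℝ ℝ)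
          ((x a • ((-((ρf s x) ^ 2)⁻¹) • Dρ x)
            + (ρf s x)⁻¹ • (ContinuousLinearMap.proj a : (Fin 3 → ℝ) →L[ℝ] ℝ))
          (Pi.single a 1)) (v x ^ 2))
          = fun x => w a x * v x ^ 2 := by
        funext x; rw [ContinuousLinearMap.mul_apply', hWeval]
      rw [e2]; exact hWb.integrable
    · have e1 : (fun x => (ContinuousLinearMap.mul ℝ ℝ) (x a * (ρf s x)⁻¹)
          (((2 * v x) • fderiv ℝ v x) (Pi.single a 1)))
          = fun x => (x a * (ρf s x)⁻¹) * (2 * v x * G a x) := by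
        funext x; rw [ContinuousLinearMap.mul_apply', hgeval]
      rw [e1]; exact hWa.integrable
    · exact hWc.integrable
  -- now the chain of inequalities
  set Q := ∫ x, (v x) ^ 2 / ρf s x with hQ
  have hQ0 : 0 ≤ Q := integral_nonneg fun x => div_nonneg (sq_nonneg _) (hρ x).le
  have hQCC : CC (R + 1) (fun x => (v x) ^ 2 / ρf s x) := by
    have := hCCv.sq.mul_cont hrinv
    refine ⟨by simpa [div_eq_inv_mul] using this.1, fun x hx => ?_⟩
    show v x ^ 2 / ρf s x = 0
    rw [hCCv.2 x hx]; simp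
  have key1 : Q ≤ ∑ a : Fin 3, ∫ x, w a x * v x ^ 2 := by
    rw [← integral_finset_sum _ (fun a _ => (hCCv.sq.mul_cont (hwcont a)).integrable)]
    refine integral_mono hQCC.integrable
      (by
        refine (Continuous.integrable_of_hasCompactSupport ?_ ?_)
        · exact continuous_finset_sum _ fun a _ => (hwcont a).mul (hv.continuous.pow 2)
        · refine HasCompactSupport.intro (isCompact_closedBall (0 : Fin 3 → ℝ) (R + 1))
            fun x hx => ?_
          rw [Metric.mem_closedBall, dist_zero_right] at hx
          have := hCCv.2 x (not_le.mp hx).le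
          simp [this]) fun x => ?_
    have hSx := sum_sq_nonneg x
    have hrx : ∑ a : Fin 3, (x a) ^ 2 ≤ ρf s x := by unfold ρf; nlinarith
    have hsum : ∑ a : Fin 3, w a x
        = 3 * (ρf s x)⁻¹ - 2 * (∑ a : Fin 3, (x a) ^ 2) * ((ρf s x) ^ 2)⁻¹ := by
      rw [hw]
      rw [Finset.sum_sub_distrib, Finset.sum_const]
      simp only [Finset.card_univ, Fintype.card_fin, nsmul_eq_mul]
      rw [← Finset.sum_mul, ← Finset.mul_sum]
      ring_nf
    have hweight : (ρf s x)⁻¹ ≤ ∑ a : Fin 3, w a x := by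
      rw [hsum]
      have hb : (0:ℝ) < ((ρf s x) ^ 2)⁻¹ := inv_pos.2 (pow_pos (hρ x) 2)
      have hab : (ρf s x)⁻¹ = ρf s x * ((ρf s x) ^ 2)⁻¹ := by
        rw [sq]; field_simp
      rw [hab]
      nlinarith [hρ x]
    calc (v x) ^ 2 / ρf s x = (ρf s x)⁻¹ * (v x) ^ 2 := by rw [div_eq_inv_mul]
      _ ≤ (∑ a : Fin 3, w a x) * (v x) ^ 2 :=
          mul_le_mul_of_nonneg_right hweight (sq_nonneg _)
      _ = ∑ a : Fin 3, w a x * v x ^ 2 := by rw [Finset.sum_mul]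
  have key2 : ∀ a : Fin 3, - ∫ x, (x a * (ρf s x)⁻¹) * (2 * v x * G a x)
      ≤ 2 * (Real.sqrt Q * Real.sqrt (∫ x, (G a x) ^ 2)) := by
    intro a
    set φ : (Fin 3 → ℝ) → ℝ := fun x => |v x| / Real.sqrt (ρf s x) with hφ
    set ψ : (Fin 3 → ℝ) → ℝ := fun x => |G a x| with hψ
    have hφcont : Continuous φ :=
      (hv.continuous.abs).div (Real.continuous_sqrt.comp (cont_rho s)) hsq
    have hψcont : Continuous ψ := (hGcont a).abs
    have hφCC : CC (R + 1) φ := ⟨hφcont, fun x hx => by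
      show |v x| / _ = 0; rw [hCCv.2 x hx]; simp⟩
    have hψCC : CC (R + 1) ψ := ⟨hψcont, fun x hx => by
      show |G a x| = 0; rw [(hCCG a).2 x hx]; simp⟩
    have hφψ : CC (R + 1) (fun x => φ x * ψ x) := hφCC.mul hψCC
    have hneg : CC (R + 1) (fun x => -((x a * (ρf s x)⁻¹) * (2 * v x * G a x))) := by
      have := ((hCCv.const_mul 2).mul (hCCG a)).mul_cont ((continuous_apply a).mul hrinv)
      exact ⟨this.1.neg, fun x hx => by
        show -((x a * (ρf s x)⁻¹) * (2 * v x * G a x)) = 0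
        rw [hCCv.2 x hx]; ring⟩
    have hpt : ∀ x, -((x a * (ρf s x)⁻¹) * (2 * v x * G a x)) ≤ 2 * (φ x * ψ x) := by
      intro x
      have h1 : |x a| ≤ Real.sqrt (ρf s x) := by
        refine Real.abs_le_sqrt ?_
        have := Finset.single_le_sum (fun i (_ : i ∈ Finset.univ) => sq_nonneg (x i))
          (Finset.mem_univ a)
        unfold ρf; nlinarith
      have h2 : Real.sqrt (ρf s x) * (ρf s x)⁻¹ = (Real.sqrt (ρf s x))⁻¹ := by
        rw [← div_eq_mul_inv, Real.sqrt_div_self', one_div]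
      calc -((x a * (ρf s x)⁻¹) * (2 * v x * G a x))
          ≤ |(x a * (ρf s x)⁻¹) * (2 * v x * G a x)| := neg_le_abs _
        _ = (|x a| * (ρf s x)⁻¹) * (2 * |v x| * |G a x|) := by
            rw [abs_mul, abs_mul, abs_mul, abs_mul]
            rw [abs_of_nonneg (inv_nonneg.2 (hρ x).le),
              abs_of_nonneg (by norm_num : (0:ℝ) ≤ (2:ℝ))]
        _ ≤ (Real.sqrt (ρf s x) * (ρf s x)⁻¹) * (2 * |v x| * |G a x|) := by
            refine mul_le_mul_of_nonneg_right
              (mul_le_mul_of_nonneg_right h1 (inv_nonneg.2 (hρ x).le)) (by positivity)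
        _ = 2 * (φ x * ψ x) := by
            rw [h2, hφ, hψ]
            simp only []
            rw [div_eq_inv_mul]
            ring
    have hint : ∫ x, -((x a * (ρf s x)⁻¹) * (2 * v x * G a x))
        ≤ ∫ x, 2 * (φ x * ψ x) :=
      integral_mono hneg.integrable ((hφψ.const_mul 2).integrable) hpt
    have hcs : ∫ x, φ x * ψ x ≤ Real.sqrt (∫ x, φ x ^ 2) * Real.sqrt (∫ x, ψ x ^ 2) :=
      integral_CS hφCC.sq.integrable hψCC.sq.integrable hφψ.integrable
    have hφ2 : ∫ x, φ x ^ 2 = Q := by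
      refine integral_congr_ae (Filter.Eventually.of_forall fun x => ?_)
      rw [hφ]
      show (|v x| / Real.sqrt (ρf s x)) ^ 2 = (v x) ^ 2 / ρf s x
      rw [div_pow, sq_abs, Real.sq_sqrt (hρ x).le]
    have hψ2 : ∫ x, ψ x ^ 2 = ∫ x, (G a x) ^ 2 := by
      refine integral_congr_ae (Filter.Eventually.of_forall fun x => ?_)
      rw [hψ]; exact sq_abs _
    rw [show (fun x => -((x a * (ρf s x)⁻¹) * (2 * v x * G a x)))
      = fun x => -((fun y => (y a * (ρf s y)⁻¹) * (2 * v y * G a y)) x) from rfl,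
      integral_neg] at hint
    calc - ∫ x, (x a * (ρf s x)⁻¹) * (2 * v x * G a x)
        ≤ ∫ x, 2 * (φ x * ψ x) := hint
      _ = 2 * ∫ x, φ x * ψ x := integral_cmul 2 _
      _ ≤ 2 * (Real.sqrt (∫ x, φ x ^ 2) * Real.sqrt (∫ x, ψ x ^ 2)) := by linarith [hcs]
      _ = 2 * (Real.sqrt Q * Real.sqrt (∫ x, (G a x) ^ 2)) := by rw [hφ2, hψ2]
  have main : Q ≤ 2 * Real.sqrt Q * ∑ a : Fin 3, Real.sqrt (∫ x, (G a x) ^ 2) := by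
    calc Q ≤ ∑ a : Fin 3, ∫ x, w a x * v x ^ 2 := key1
      _ = ∑ a : Fin 3, - ∫ x, (x a * (ρf s x)⁻¹) * (2 * v x * G a x) :=
          Finset.sum_congr rfl fun a _ => ibp a
      _ ≤ ∑ a : Fin 3, 2 * (Real.sqrt Q * Real.sqrt (∫ x, (G a x) ^ 2)) :=
          Finset.sum_le_sum fun a _ => key2 a
      _ = 2 * Real.sqrt Q * ∑ a : Fin 3, Real.sqrt (∫ x, (G a x) ^ 2) := by
          rw [Finset.mul_sum]; refine Finset.sum_congr rfl fun a _ => by ring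
  rcases eq_or_lt_of_le hQ0 with hQz | hQpos
  · rw [← hQz, Real.sqrt_zero]
    positivity
  · have hsQ : 0 < Real.sqrt Q := Real.sqrt_pos.2 hQpos
    have hQs : Real.sqrt Q * Real.sqrt Q = Q := Real.mul_self_sqrt hQ0
    nlinarith [main]

/-! ### Assembly for the main theorem -/

def Vf (s : ℝ) (u : (Fin 4 → ℝ) → ℝ) : (Fin 3 → ℝ) → ℝ := fun x => u (hpt s x)
def Pf (s : ℝ) (u : (Fin 4 → ℝ) → ℝ) (i : Fin 4) : (Fin 3 → ℝ) → ℝ :=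
  fun x => pd i u (hpt s x)
def Gf (s : ℝ) (u : (Fin 4 → ℝ) → ℝ) (a : Fin 3) : (Fin 3 → ℝ) → ℝ :=
  fun x => sdu a u (hpt s x)
def Ff (s : ℝ) (u : (Fin 4 → ℝ) → ℝ) : (Fin 3 → ℝ) → ℝ :=
  fun x => Kop u (hpt s x) + 2 * Vf s u x

variable {s : ℝ} {u : (Fin 4 → ℝ) → ℝ}

lemma Gf_eq (s : ℝ) (u : (Fin 4 → ℝ) → ℝ) (a : Fin 3) (x : Fin 3 → ℝ) :
    Gf s u a x = (x a / hpt s x 0) * Pf s u 0 x + Pf s u a.succ x := by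
  unfold Gf sdu Pf
  rw [hpt_succ]

lemma Ff_eq (hs0 : 0 < s) (u : (Fin 4 → ℝ) → ℝ) (x : Fin 3 → ℝ) :
    Ff s u x = (s * (s / hpt s x 0) * Pf s u 0 x
      + 2 * ∑ a : Fin 3, x a * Gf s u a x) + 2 * Vf s u x := by
  unfold Ff Kop
  rw [sqrt_t_sub_r hs0]
  have hsum : ∑ a : Fin 3, hpt s x a.succ * sdu a u (hpt s x)
      = ∑ a : Fin 3, x a * Gf s u a x :=
    Finset.sum_congr rfl fun a _ => by rw [hpt_succ]; rfl
  rw [hsum]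
  rfl

lemma T_ne (hs0 : 0 < s) (x : Fin 3 → ℝ) : hpt s x 0 ≠ 0 := (ht_pos hs0).ne'

lemma cont_Vf (hu : ContDiff ℝ (⊤ : ℕ∞) u) (hs0 : 0 < s) : Continuous (Vf s u) :=
  hu.continuous.comp (cont_hpt hs0)

lemma cont_Pf (hu : ContDiff ℝ (⊤ : ℕ∞) u) (hs0 : 0 < s) (i : Fin 4) : Continuous (Pf s u i) :=
  (cont_pd hu i).comp (cont_hpt hs0)

lemma cont_w1 (hs0 : 0 < s) : Continuous (fun x : Fin 3 → ℝ => s / hpt s x 0) :=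
  continuous_const.div (cont_T hs0) (T_ne hs0)

lemma cont_w2 (hs0 : 0 < s) (a : Fin 3) :
    Continuous (fun x : Fin 3 → ℝ => x a / hpt s x 0) :=
  (continuous_apply a).div (cont_T hs0) (T_ne hs0)

lemma cont_Gf (hu : ContDiff ℝ (⊤ : ℕ∞) u) (hs0 : 0 < s) (a : Fin 3) : Continuous (Gf s u a) := by
  rw [show Gf s u a = fun x => (x a / hpt s x 0) * Pf s u 0 x + Pf s u a.succ x from
    funext fun x => Gf_eq s u a x]
  exact ((cont_w2 hs0 a).mul (cont_Pf hu hs0 0)).add (cont_Pf hu hs0 a.succ)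

lemma cont_Ff (hu : ContDiff ℝ (⊤ : ℕ∞) u) (hs0 : 0 < s) : Continuous (Ff s u) := by
  rw [show Ff s u = fun x => (s * (s / hpt s x 0) * Pf s u 0 x
      + 2 * ∑ a : Fin 3, x a * Gf s u a x) + 2 * Vf s u x from
    funext fun x => Ff_eq hs0 u x]
  refine Continuous.add (Continuous.add ?_ ?_) ?_
  · exact (continuous_const.mul (cont_w1 hs0)).mul (cont_Pf hu hs0 0)
  · exact continuous_const.mul (continuous_finset_sum _ fun a _ =>
      (continuous_apply a).mul (cont_Gf hu hs0 a))
  · exact continuous_const.mul (cont_Vf hu hs0)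

/-- weight bounds -/
lemma abs_w1_le (hs0 : 0 < s) (x : Fin 3 → ℝ) : |s / hpt s x 0| ≤ 1 := by
  rw [abs_div, abs_of_nonneg hs0.le, abs_of_nonneg (ht_pos hs0 (x := x)).le]
  rw [div_le_one (ht_pos hs0)]
  exact hts hs0

lemma abs_w2_le (hs0 : 0 < s) (a : Fin 3) (x : Fin 3 → ℝ) : |x a / hpt s x 0| ≤ 1 := by
  rw [abs_div, abs_of_nonneg (ht_pos hs0 (x := x)).le]
  rw [div_le_one (ht_pos hs0)]
  exact abs_le_t hs0 a

lemma abs_w3_le (hs0 : 0 < s) (x : Fin 3 → ℝ) : |(s / hpt s x 0) ^ 2| ≤ 1 := by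
  rw [show ((s / hpt s x 0) ^ 2) = (s / hpt s x 0) * (s / hpt s x 0) from sq _, abs_mul]
  have := abs_w1_le hs0 x
  nlinarith [abs_nonneg (s / hpt s x 0)]

end Stmt3

open Stmt3 in
/-- Weighted `L²` control by the conformal energy. -/
theorem stmt_3 : ∃ C > (0:ℝ), ∀ (s₀ s₁ : ℝ), 2 ≤ s₀ → s₀ ≤ s₁ →
    ∀ u : (Fin 4 → ℝ) → ℝ, ContDiff ℝ (⊤ : ℕ∞) u → vanishNearBdry u →
      ∀ s ∈ Set.Icc s₀ s₁, ∀ α : Fin 4,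
        L2f s (fun p => s * (s / p 0) ^ 2 * pd α u p)
            + L2f s (fun p => (s / p 0) * u p)
          ≤ C * Real.sqrt (Econ s u) := by
  refine ⟨26, by norm_num, ?_⟩
  intro s₀ s₁ hs₀ hs₀₁ u hu hvb s hsmem α
  obtain ⟨δ, hδ, hvan⟩ := hvb
  have hs2 : 2 ≤ s := le_trans hs₀ hsmem.1
  have hs0 : (0:ℝ) < s := by linarith
  have hvan0 : ∀ x : Fin 3 → ℝ, s ^ 2 ≤ ‖x‖ →
      u (hpt s x) = 0 ∧ ∀ i, pd i u (hpt s x) = 0 :=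
    fun x hx => vanish hδ hvan hs2 x hx
  -- basic CC facts
  have cV : CC (s ^ 2) (Vf s u) := ⟨cont_Vf hu hs0, fun x hx => (hvan0 x hx).1⟩
  have cP : ∀ i, CC (s ^ 2) (Pf s u i) :=
    fun i => ⟨cont_Pf hu hs0 i, fun x hx => (hvan0 x hx).2 i⟩
  have cG : ∀ a, CC (s ^ 2) (Gf s u a) := by
    intro a
    refine ⟨cont_Gf hu hs0 a, fun x hx => ?_⟩
    show sdu a u (hpt s x) = 0
    unfold sdu
    rw [(hvan0 x hx).2 0, (hvan0 x hx).2 a.succ]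
    ring
  have cF : CC (s ^ 2) (Ff s u) := by
    refine ⟨cont_Ff hu hs0, fun x hx => ?_⟩
    rw [Ff_eq hs0 u x, cV.2 x hx, (cP 0).2 x hx,
      Finset.sum_eq_zero fun a (_ : a ∈ Finset.univ) => by rw [(cG a).2 x hx, mul_zero]]
    ring
  have cSG : ∀ a, CC (s ^ 2) (fun x => s * Gf s u a x) :=
    fun a => (cG a).mul_cont continuous_const
  -- the conformal energy
  have hEcon : Econ s u
      = ∫ x : Fin 3 → ℝ, ((Ff s u x) ^ 2 + ∑ a : Fin 3, (s * Gf s u a x) ^ 2) := rfl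
  have cInt : CC (s ^ 2) (fun x => (Ff s u x) ^ 2 + ∑ a : Fin 3, (s * Gf s u a x) ^ 2) := by
    constructor
    · exact (cF.sq.1).add (continuous_finset_sum _ fun a _ => ((cSG a).sq.1))
    · intro x hx
      show (Ff s u x) ^ 2 + ∑ a : Fin 3, (s * Gf s u a x) ^ 2 = 0
      rw [cF.2 x hx,
        Finset.sum_eq_zero fun a (_ : a ∈ Finset.univ) => by rw [(cG a).2 x hx]; ring]
      ring
  have hE0 : (0:ℝ) ≤ Real.sqrt (Econ s u) := Real.sqrt_nonneg _
  have hNF : Real.sqrt (∫ x, (Ff s u x) ^ 2) ≤ Real.sqrt (Econ s u) := by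
    rw [hEcon]
    refine Real.sqrt_le_sqrt (integral_mono cF.sq.integrable cInt.integrable fun x => ?_)
    have : (0:ℝ) ≤ ∑ a : Fin 3, (s * Gf s u a x) ^ 2 :=
      Finset.sum_nonneg fun a _ => sq_nonneg _
    show (Ff s u x) ^ 2 ≤ (Ff s u x) ^ 2 + ∑ a : Fin 3, (s * Gf s u a x) ^ 2
    linarith
  have hNG : ∀ a, Real.sqrt (∫ x, (s * Gf s u a x) ^ 2) ≤ Real.sqrt (Econ s u) := by
    intro a
    rw [hEcon]
    refine Real.sqrt_le_sqrt (integral_mono (cSG a).sq.integrable cInt.integrable fun x => ?_)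
    have h1 : (s * Gf s u a x) ^ 2 ≤ ∑ b : Fin 3, (s * Gf s u b x) ^ 2 :=
      Finset.single_le_sum (fun b (_ : b ∈ Finset.univ) => sq_nonneg (s * Gf s u b x))
        (Finset.mem_univ a)
    show (s * Gf s u a x) ^ 2 ≤ (Ff s u x) ^ 2 + ∑ b : Fin 3, (s * Gf s u b x) ^ 2
    nlinarith [sq_nonneg (Ff s u x)]
  -- Hardy inequality for the weighted zero-order term
  have hVdiff : ContDiff ℝ (⊤ : ℕ∞) (Vf s u) := hu.comp (contDiff_hpt hs0)
  have hhy0 := hardy hs0 (s ^ 2) (Vf s u) hVdiff (fun x hx => (hvan0 x hx).1)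
  have hhy : Real.sqrt (∫ x, (Vf s u x) ^ 2 / ρf s x)
      ≤ 2 * ∑ a : Fin 3, Real.sqrt (∫ x, (Gf s u a x) ^ 2) := by
    refine le_trans hhy0 (le_of_eq ?_)
    congr 1
    refine Finset.sum_congr rfl fun a _ => ?_
    congr 1
    refine integral_congr_ae (Filter.Eventually.of_forall fun x => ?_)
    exact congrArg (· ^ 2) (fderiv_comp_hpt hu hs0 x a)
  have hNW : Real.sqrt (∫ x, ((s / hpt s x 0) * Vf s u x) ^ 2)
      ≤ 6 * Real.sqrt (Econ s u) := by
    have hwk : (fun x => ((s / hpt s x 0) * Vf s u x) ^ 2)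
        = fun x => s ^ 2 * ((Vf s u x) ^ 2 / ρf s x) := by
      funext x
      have hT2 : (hpt s x 0) ^ 2 = ρf s x := ht_sq hs0
      rw [mul_pow, div_pow, hT2, div_mul_eq_mul_div, mul_div_assoc]
    have h1 : ∫ x, ((s / hpt s x 0) * Vf s u x) ^ 2
        = s ^ 2 * ∫ x, (Vf s u x) ^ 2 / ρf s x := by rw [hwk, integral_cmul]
    rw [h1, Real.sqrt_mul (sq_nonneg s), Real.sqrt_sq_eq_abs, abs_of_nonneg hs0.le]
    have h2 : s * Real.sqrt (∫ x, (Vf s u x) ^ 2 / ρf s x)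
        ≤ s * (2 * ∑ a : Fin 3, Real.sqrt (∫ x, (Gf s u a x) ^ 2)) :=
      mul_le_mul_of_nonneg_left hhy hs0.le
    have h3 : ∀ a : Fin 3, s * Real.sqrt (∫ x, (Gf s u a x) ^ 2)
        = Real.sqrt (∫ x, (s * Gf s u a x) ^ 2) := by
      intro a; rw [N_const_mul s (Gf s u a), abs_of_nonneg hs0.le]
    have h4 : s * (2 * ∑ a : Fin 3, Real.sqrt (∫ x, (Gf s u a x) ^ 2))
        = 2 * ∑ a : Fin 3, Real.sqrt (∫ x, (s * Gf s u a x) ^ 2) := by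
      calc s * (2 * ∑ a : Fin 3, Real.sqrt (∫ x, (Gf s u a x) ^ 2))
          = 2 * (s * ∑ a : Fin 3, Real.sqrt (∫ x, (Gf s u a x) ^ 2)) := by ring
        _ = 2 * ∑ a : Fin 3, s * Real.sqrt (∫ x, (Gf s u a x) ^ 2) := by
            rw [Finset.mul_sum]
        _ = 2 * ∑ a : Fin 3, Real.sqrt (∫ x, (s * Gf s u a x) ^ 2) := by
            rw [Finset.sum_congr rfl fun a _ => h3 a]
    have h5 : ∑ a : Fin 3, Real.sqrt (∫ x, (s * Gf s u a x) ^ 2)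
        ≤ 3 * Real.sqrt (Econ s u) := by
      have := Finset.sum_le_sum fun a (_ : a ∈ Finset.univ) => hNG a
      simpa [Finset.sum_const, Finset.card_univ] using this
    calc s * Real.sqrt (∫ x, (Vf s u x) ^ 2 / ρf s x)
        ≤ s * (2 * ∑ a : Fin 3, Real.sqrt (∫ x, (Gf s u a x) ^ 2)) := h2
      _ = 2 * ∑ a : Fin 3, Real.sqrt (∫ x, (s * Gf s u a x) ^ 2) := h4
      _ ≤ 2 * (3 * Real.sqrt (Econ s u)) := by linarith
      _ = 6 * Real.sqrt (Econ s u) := by ring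
  -- weighted-derivative pieces
  have cWV : CC (s ^ 2) (fun x => (s / hpt s x 0) * Vf s u x) := cV.mul_cont (cont_w1 hs0)
  have cA : CC (s ^ 2) (fun x => (s / hpt s x 0) * Ff s u x) := cF.mul_cont (cont_w1 hs0)
  have cB : CC (s ^ 2) (fun x => (-2) * ((s / hpt s x 0) * Vf s u x)) := cWV.const_mul (-2)
  have cWG : ∀ a, CC (s ^ 2) (fun x => (x a / hpt s x 0) * (s * Gf s u a x)) :=
    fun a => (cSG a).mul_cont (cont_w2 hs0 a)
  have cC : ∀ a, CC (s ^ 2) (fun x => (-2) * ((x a / hpt s x 0) * (s * Gf s u a x))) :=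
    fun a => (cWG a).const_mul (-2)
  have hNA : Real.sqrt (∫ x, ((s / hpt s x 0) * Ff s u x) ^ 2) ≤ Real.sqrt (Econ s u) := by
    refine le_trans (N_mono cA.1 cF fun x => ?_) hNF
    rw [abs_mul]
    exact mul_le_of_le_one_left (abs_nonneg _) (abs_w1_le hs0 x)
  have hNB : Real.sqrt (∫ x, ((-2) * ((s / hpt s x 0) * Vf s u x)) ^ 2)
      ≤ 12 * Real.sqrt (Econ s u) := by
    rw [N_const_mul (-2)]
    rw [show |(-2:ℝ)| = 2 by norm_num]
    linarith [hNW]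
  have hNC : ∀ a, Real.sqrt (∫ x, ((-2) * ((x a / hpt s x 0) * (s * Gf s u a x))) ^ 2)
      ≤ 2 * Real.sqrt (Econ s u) := by
    intro a
    rw [N_const_mul (-2)]
    rw [show |(-2:ℝ)| = 2 by norm_num]
    have h1 : Real.sqrt (∫ x, ((x a / hpt s x 0) * (s * Gf s u a x)) ^ 2)
        ≤ Real.sqrt (Econ s u) := by
      refine le_trans (N_mono (cWG a).1 (cSG a) fun x => ?_) (hNG a)
      rw [abs_mul]
      exact mul_le_of_le_one_left (abs_nonneg _) (abs_w2_le hs0 a x)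
    linarith
  -- the time-derivative estimate
  have hNf0 : Real.sqrt (∫ x, (s * (s / hpt s x 0) ^ 2 * Pf s u 0 x) ^ 2)
      ≤ 19 * Real.sqrt (Econ s u) := by
    have e0 : (fun x : Fin 3 → ℝ => (s * (s / hpt s x 0) ^ 2 * Pf s u 0 x) ^ 2)
        = fun x => (((s / hpt s x 0) * Ff s u x)
          + (((-2) * ((s / hpt s x 0) * Vf s u x))
            + (((-2) * ((x 0 / hpt s x 0) * (s * Gf s u 0 x)))
              + (((-2) * ((x 1 / hpt s x 0) * (s * Gf s u 1 x)))
                + ((-2) * ((x 2 / hpt s x 0) * (s * Gf s u 2 x))))))) ^ 2 := by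
      funext x
      rw [Ff_eq hs0 u x, Fin.sum_univ_three]
      ring
    rw [e0]
    have t3 := N_add (cC 1) (cC 2)
    have t2 := N_add (cC 0) ((cC 1).add (cC 2))
    have t1 := N_add cB ((cC 0).add ((cC 1).add (cC 2)))
    have t0 := N_add cA (cB.add ((cC 0).add ((cC 1).add (cC 2))))
    refine le_trans t0 ?_
    have h1 := hNC 0; have h2 := hNC 1; have h3 := hNC 2
    linarith [hNA, hNB, t1, t2, t3]
  -- the spatial-derivative estimate
  have cf0 : CC (s ^ 2) (fun x => s * (s / hpt s x 0) ^ 2 * Pf s u 0 x) :=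
    (cP 0).mul_cont (continuous_const.mul ((cont_w1 hs0).pow 2))
  have hNfa : ∀ a : Fin 3,
      Real.sqrt (∫ x, (s * (s / hpt s x 0) ^ 2 * Pf s u a.succ x) ^ 2)
        ≤ 20 * Real.sqrt (Econ s u) := by
    intro a
    have ea : (fun x : Fin 3 → ℝ => (s * (s / hpt s x 0) ^ 2 * Pf s u a.succ x) ^ 2)
        = fun x => (((s / hpt s x 0) ^ 2 * (s * Gf s u a x))
          + ((-(x a / hpt s x 0)) * (s * (s / hpt s x 0) ^ 2 * Pf s u 0 x))) ^ 2 := by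
      funext x
      rw [show Pf s u a.succ x = Gf s u a x - (x a / hpt s x 0) * Pf s u 0 x from by
        rw [Gf_eq]; ring]
      ring
    rw [ea]
    have cDa : CC (s ^ 2) (fun x => (s / hpt s x 0) ^ 2 * (s * Gf s u a x)) :=
      (cSG a).mul_cont ((cont_w1 hs0).pow 2)
    have cEa : CC (s ^ 2)
        (fun x => (-(x a / hpt s x 0)) * (s * (s / hpt s x 0) ^ 2 * Pf s u 0 x)) :=
      cf0.mul_cont ((cont_w2 hs0 a).neg)
    refine le_trans (N_add cDa cEa) ?_
    have hDa : Real.sqrt (∫ x, ((s / hpt s x 0) ^ 2 * (s * Gf s u a x)) ^ 2)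
        ≤ Real.sqrt (Econ s u) := by
      refine le_trans (N_mono cDa.1 (cSG a) fun x => ?_) (hNG a)
      rw [abs_mul]
      exact mul_le_of_le_one_left (abs_nonneg _) (abs_w3_le hs0 x)
    have hEa : Real.sqrt
        (∫ x, ((-(x a / hpt s x 0)) * (s * (s / hpt s x 0) ^ 2 * Pf s u 0 x)) ^ 2)
        ≤ 19 * Real.sqrt (Econ s u) := by
      refine le_trans (N_mono cEa.1 cf0 fun x => ?_) hNf0
      rw [abs_mul, abs_neg]
      exact mul_le_of_le_one_left (abs_nonneg _) (abs_w2_le hs0 a x)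
    linarith
  -- conclusion
  have hgoal1 : L2f s (fun p => s * (s / p 0) ^ 2 * pd α u p)
      = Real.sqrt (∫ x, (s * (s / hpt s x 0) ^ 2 * Pf s u α x) ^ 2) := rfl
  have hgoal2 : L2f s (fun p => (s / p 0) * u p)
      = Real.sqrt (∫ x, ((s / hpt s x 0) * Vf s u x) ^ 2) := rfl
  rw [hgoal1, hgoal2]
  refine Fin.cases ?_ ?_ α
  · linarith [hNf0, hNW]
  · intro a
    linarith [hNfa a, hNW]
end
end

section
/- ODE lemma with damping barrier: Let c > 0, λ₀ < λ₁, and let D, f : [λ₀,λ₁] → ℝ be continuous with sup_{λ∈[λ₀,λ₁]} |D(λ)| ≤ c. Suppose there exists a function S : [λ₀,λ₁] → ℝ such that S(η) + D(η) ≤ 0 for all η and ∫_{λ₀}^{λ₁} |S(η)| dη ≤ C_S for some constant C_S > 0. Let w : [λ₀,λ₁] → ℝ be twice continuously differentiable with w''(λ) − D(λ) w'(λ) + c² w(λ) = f(λ) for all λ. Then there is a constant K depending only on c and C_S such that for every λ ∈ [λ₀,λ₁]: |w(λ)| + |w'(λ)| ≤ K ( |w(λ₀)| + |w'(λ₀)|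 + ∫_{λ₀}^{λ} |f(τ)| dτ ). -/
noncomputable section
open MeasureTheory

set_option maxHeartbeats 1000000 in
/-- ODE lemma with damping barrier (Lemma 3.2). -/
theorem stmt_10 : ∀ (c CS : ℝ), 0 < c → 0 < CS → ∃ K > (0:ℝ),
    ∀ (lam₀ lam₁ : ℝ) (D f S w w' w'' : ℝ → ℝ),
      lam₀ < lam₁ →
      ContinuousOn D (Set.Icc lam₀ lam₁) →
      ContinuousOn f (Set.Icc lam₀ lam₁) →
      -- sup |D| ≤ c
      (∀ lam ∈ Set.Icc lam₀ lam₁, |D lam| ≤ c) →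
      -- barrier function S
      (∀ η ∈ Set.Icc lam₀ lam₁, S η + D η ≤ 0) →
      IntervalIntegrable S volume lam₀ lam₁ →
      (∫ η in lam₀..lam₁, |S η|) ≤ CS →
      -- w is twice continuously differentiable with derivatives w', w''
      (∀ lam ∈ Set.Icc lam₀ lam₁, HasDerivAt w (w' lam) lam) →
      (∀ lam ∈ Set.Icc lam₀ lam₁, HasDerivAt w' (w'' lam) lam) →
      ContinuousOn w'' (Set.Icc lam₀ lam₁) →
      -- the ODE
      (∀ lam ∈ Set.Icc lam₀ lam₁, w'' lam - D lam * w' lam + c ^ 2 * w lam = f lam) →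
      ∀ lam ∈ Set.Icc lam₀ lam₁,
        |w lam| + |w' lam|
          ≤ K * (|w lam₀| + |w' lam₀| + ∫ τ in lam₀..lam, |f τ|) := by
  intro c CS hc hCS
  refine ⟨(1 + 1/c) * max 1 c * Real.exp CS, by positivity, ?_⟩
  intro lam₀ lam₁ D f S w w' w'' hlt hD hf hDc hS hSint hSCS hw hw' hw''c hode lam hlam
  have hle : lam₀ ≤ lam₁ := hlt.le
  have hmem₀ : lam₀ ∈ Set.Icc lam₀ lam₁ := Set.left_mem_Icc.2 hle
  -- projection onto the interval
  set π : ℝ → ℝ := fun x => ((Set.projIcc lam₀ lam₁ hle x : Set.Icc lam₀ lam₁) : ℝ) with hπ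
  have hπcont : Continuous π := continuous_subtype_val.comp (continuous_projIcc)
  have hπmem : ∀ x, π x ∈ Set.Icc lam₀ lam₁ := fun x => (Set.projIcc lam₀ lam₁ hle x).2
  have hπid : ∀ x ∈ Set.Icc lam₀ lam₁, π x = x := fun x hx => by
    simp [hπ, Set.projIcc_of_mem hle hx]
  -- extended D⁺ and |f|
  set Dp : ℝ → ℝ := fun x => max (D (π x)) 0 with hDp
  have hDpcont : Continuous Dp := (hD.comp_continuous hπcont hπmem).max continuous_const
  have hDpnn : ∀ x, 0 ≤ Dp x := fun x => le_max_right _ _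
  have hDpeq : ∀ x ∈ Set.Icc lam₀ lam₁, Dp x = max (D x) 0 := fun x hx => by
    simp [hDp, hπid x hx]
  have hDle : ∀ x ∈ Set.Icc lam₀ lam₁, D x ≤ Dp x := fun x hx => by
    rw [hDpeq x hx]; exact le_max_left _ _
  set fe : ℝ → ℝ := fun x => |f (π x)| with hfe
  have hfecont : Continuous fe := (hf.comp_continuous hπcont hπmem).abs
  have hfenn : ∀ x, 0 ≤ fe x := fun x => abs_nonneg _
  have hfeeq : ∀ x ∈ Set.Icc lam₀ lam₁, fe x = |f x| := fun x hx => by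
    simp [hfe, hπid x hx]
  -- primitives
  set A : ℝ → ℝ := fun x => ∫ t in lam₀..x, Dp t with hA
  have hAderiv : ∀ x, HasDerivAt A (Dp x) x := fun x =>
    (hDpcont.integral_hasStrictDerivAt lam₀ x).hasDerivAt
  have hAcont : Continuous A := by
    refine continuous_iff_continuousAt.2 fun x => (hAderiv x).continuousAt
  have hA0 : A lam₀ = 0 := intervalIntegral.integral_same
  have hAnn : ∀ x ∈ Set.Icc lam₀ lam₁, 0 ≤ A x := fun x hx =>
    intervalIntegral.integral_nonneg hx.1 fun t _ => hDpnn t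
  have hACS : ∀ x ∈ Set.Icc lam₀ lam₁, A x ≤ CS := by
    intro x hx
    have h1 : A x ≤ ∫ t in lam₀..lam₁, Dp t := by
      refine intervalIntegral.integral_mono_interval le_rfl hx.1 hx.2 ?_
        (hDpcont.intervalIntegrable _ _)
      exact Filter.Eventually.of_forall fun t => hDpnn t
    have h2 : (∫ t in lam₀..lam₁, Dp t) ≤ ∫ t in lam₀..lam₁, |S t| := by
      refine intervalIntegral.integral_mono_on hle (hDpcont.intervalIntegrable _ _)
        hSint.abs ?_
      intro t ht
      rw [hDpeq t ht]
      have h3 : D t ≤ -S t := by linarith [hS t ht]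
      have h4 : -S t ≤ |S t| := neg_le_abs _
      exact max_le (h3.trans h4) (abs_nonneg _)
    linarith
  set Fe : ℝ → ℝ := fun x => ∫ t in lam₀..x, fe t with hFe
  have hFederiv : ∀ x, HasDerivAt Fe (fe x) x := fun x =>
    (hfecont.integral_hasStrictDerivAt lam₀ x).hasDerivAt
  have hFecont : Continuous Fe :=
    continuous_iff_continuousAt.2 fun x => (hFederiv x).continuousAt
  have hFe0 : Fe lam₀ = 0 := intervalIntegral.integral_same
  have hFenn : ∀ x ∈ Set.Icc lam₀ lam₁, 0 ≤ Fe x := fun x hx =>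
    intervalIntegral.integral_nonneg hx.1 fun t _ => hfenn t
  have hFeeq : Fe lam = ∫ τ in lam₀..lam, |f τ| := by
    refine intervalIntegral.integral_congr fun t ht => ?_
    rw [Set.uIcc_of_le hlam.1] at ht
    exact hfeeq t ⟨ht.1, ht.2.trans hlam.2⟩
  -- energy
  set E : ℝ → ℝ := fun x => (w' x)^2 + c^2 * (w x)^2 with hE
  have hwc : ContinuousOn w (Set.Icc lam₀ lam₁) := fun x hx =>
    (hw x hx).continuousAt.continuousWithinAt
  have hw'c : ContinuousOn w' (Set.Icc lam₀ lam₁) := fun x hx =>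
    (hw' x hx).continuousAt.continuousWithinAt
  have hEcont : ContinuousOn E (Set.Icc lam₀ lam₁) :=
    ((hw'c.pow 2).add (continuousOn_const.mul (hwc.pow 2)))
  have hEnn : ∀ x, 0 ≤ E x := fun x => by positivity
  -- main Gronwall estimate with regularization ε
  have main : ∀ ε > (0:ℝ),
      Real.sqrt (E lam + ε) ≤ Real.exp CS * (Real.sqrt (E lam₀ + ε) + Fe lam) := by
    intro ε hε
    set ψ : ℝ → ℝ := fun x => Real.sqrt (E x + ε) * Real.exp (-A x) - Fe x with hψ
    have hψcont : ContinuousOn ψ (Set.Icc lam₀ lam₁) := by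
      refine ContinuousOn.sub ?_ hFecont.continuousOn
      exact ((hEcont.add continuousOn_const).sqrt).mul
        ((Real.continuous_exp.comp hAcont.neg).continuousOn)
    have hderiv : ∀ x ∈ Set.Ioo lam₀ lam₁, HasDerivAt ψ
        ((2 * w' x * w'' x + c ^ 2 * (2 * w x * w' x)) / (2 * Real.sqrt (E x + ε)) *
            Real.exp (-A x)
          + Real.sqrt (E x + ε) * (Real.exp (-A x) * -Dp x) - fe x) x := by
      intro x hx
      have hx' : x ∈ Set.Icc lam₀ lam₁ := Set.Ioo_subset_Icc_self hx
      have h1 : HasDerivAt (fun y => (w' y) ^ 2) (2 * w' x * w'' x) x := by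
        simpa [mul_comm, mul_assoc, mul_left_comm] using ((hw' x hx').fun_pow 2)
      have h2 : HasDerivAt (fun y => c ^ 2 * (w y) ^ 2) (c ^ 2 * (2 * w x * w' x)) x := by
        have := ((hw x hx').pow 2).const_mul (c ^ 2)
        simpa [mul_comm, mul_assoc, mul_left_comm] using this
      have hEx : HasDerivAt (fun y => E y + ε)
          (2 * w' x * w'' x + c ^ 2 * (2 * w x * w' x)) x := (h1.add h2).add_const ε
      have hpos : 0 < E x + ε := by have := hEnn x; linarith
      have hsq := hEx.sqrt hpos.ne'
      have hexp : HasDerivAt (fun y => Real.exp (-A y)) (Real.exp (-A x) * -Dp x) x :=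
        ((hAderiv x).neg).exp
      exact (hsq.mul hexp).sub (hFederiv x)
    have hnonpos : ∀ x ∈ Set.Ioo lam₀ lam₁,
        ((2 * w' x * w'' x + c ^ 2 * (2 * w x * w' x)) / (2 * Real.sqrt (E x + ε)) *
            Real.exp (-A x)
          + Real.sqrt (E x + ε) * (Real.exp (-A x) * -Dp x) - fe x) ≤ 0 := by
      intro x hx
      have hx' : x ∈ Set.Icc lam₀ lam₁ := Set.Ioo_subset_Icc_self hx
      set g := Real.sqrt (E x + ε) with hgdef
      have hpos : 0 < E x + ε := by have := hEnn x; linarith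
      have hgpos : 0 < g := Real.sqrt_pos.2 hpos
      have hg2 : g ^ 2 = E x + ε := Real.sq_sqrt hpos.le
      have hp2 : (w' x) ^ 2 ≤ g ^ 2 := by
        rw [hg2]; simp only [hE]; nlinarith [sq_nonneg (w x), hε.le]
      have hpg : |w' x| ≤ g := by
        rw [← Real.sqrt_sq_eq_abs, hgdef]
        exact Real.sqrt_le_sqrt (hp2.trans_eq hg2)
      have hval : w'' x = f x + D x * w' x - c ^ 2 * w x := by linarith [hode x hx']
      have hE' : 2 * w' x * w'' x + c ^ 2 * (2 * w x * w' x)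
          = 2 * (w' x * f x) + 2 * (D x * (w' x) ^ 2) := by rw [hval]; ring
      have h1 : w' x * f x ≤ g * |f x| :=
        calc w' x * f x ≤ |w' x * f x| := le_abs_self _
        _ = |w' x| * |f x| := abs_mul _ _
        _ ≤ g * |f x| := mul_le_mul_of_nonneg_right hpg (abs_nonneg _)
      have h2 : D x * (w' x) ^ 2 ≤ Dp x * g ^ 2 := by
        have ha : D x * (w' x) ^ 2 ≤ Dp x * (w' x) ^ 2 :=
          mul_le_mul_of_nonneg_right (hDle x hx') (sq_nonneg _)
        have hb : Dp x * (w' x) ^ 2 ≤ Dp x * g ^ 2 :=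
          mul_le_mul_of_nonneg_left hp2 (hDpnn x)
        linarith
      have hkey : (2 * w' x * w'' x + c ^ 2 * (2 * w x * w' x)) / (2 * g) - Dp x * g
          ≤ |f x| := by
        rw [hE', sub_le_iff_le_add, div_le_iff₀ (by positivity : (0:ℝ) < 2 * g)]
        nlinarith [h1, h2]
      have hexppos : 0 < Real.exp (-A x) := Real.exp_pos _
      have hexple : Real.exp (-A x) ≤ 1 := by
        rw [Real.exp_le_one_iff]; linarith [hAnn x hx']
      have hrw : (2 * w' x * w'' x + c ^ 2 * (2 * w x * w' x)) / (2 * g) * Real.exp (-A x)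
            + g * (Real.exp (-A x) * -Dp x) - fe x
          = Real.exp (-A x) * ((2 * w' x * w'' x + c ^ 2 * (2 * w x * w' x)) / (2 * g)
              - Dp x * g) - fe x := by ring
      rw [hrw]
      have hm1 : Real.exp (-A x) * ((2 * w' x * w'' x + c ^ 2 * (2 * w x * w' x)) / (2 * g)
          - Dp x * g) ≤ Real.exp (-A x) * |f x| := mul_le_mul_of_nonneg_left hkey hexppos.le
      have hm2 : Real.exp (-A x) * |f x| ≤ |f x| := by nlinarith [abs_nonneg (f x)]
      rw [hfeeq x hx']; linarith
    have hanti : AntitoneOn ψ (Set.Icc lam₀ lam₁) := by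
      refine antitoneOn_of_deriv_nonpos (convex_Icc _ _) hψcont ?_ ?_
      · intro x hx; rw [interior_Icc] at hx
        exact (hderiv x hx).differentiableAt.differentiableWithinAt
      · intro x hx; rw [interior_Icc] at hx
        rw [(hderiv x hx).deriv]; exact hnonpos x hx
    have hψle : ψ lam ≤ ψ lam₀ := hanti hmem₀ hlam hlam.1
    have hψ0 : ψ lam₀ = Real.sqrt (E lam₀ + ε) := by simp [hψ, hA0, hFe0]
    have h5 : Real.sqrt (E lam + ε) * Real.exp (-A lam)
        ≤ Real.sqrt (E lam₀ + ε) + Fe lam := by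
      rw [hψ0] at hψle; simp only [hψ] at hψle; linarith
    have hY : 0 ≤ Real.sqrt (E lam₀ + ε) + Fe lam :=
      add_nonneg (Real.sqrt_nonneg _) (hFenn lam hlam)
    calc Real.sqrt (E lam + ε)
        = Real.sqrt (E lam + ε) * Real.exp (-A lam) * Real.exp (A lam) := by
          rw [mul_assoc, ← Real.exp_add]; simp
      _ ≤ (Real.sqrt (E lam₀ + ε) + Fe lam) * Real.exp (A lam) :=
          mul_le_mul_of_nonneg_right h5 (Real.exp_pos _).le
      _ ≤ (Real.sqrt (E lam₀ + ε) + Fe lam) * Real.exp CS :=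
          mul_le_mul_of_nonneg_left (Real.exp_le_exp.2 (hACS lam hlam)) hY
      _ = Real.exp CS * (Real.sqrt (E lam₀ + ε) + Fe lam) := mul_comm _ _
  -- pass to the limit ε → 0
  have hmain0 : Real.sqrt (E lam) ≤ Real.exp CS * (Real.sqrt (E lam₀) + Fe lam) := by
    refine le_of_forall_pos_le_add fun δ hδ => ?_
    have hexppos : (0:ℝ) < Real.exp CS := Real.exp_pos _
    set ε := (δ / Real.exp CS) ^ 2 with hεdef
    have hεpos : 0 < ε := by positivity
    have h := main ε hεpos
    have h1 : Real.sqrt (E lam) ≤ Real.sqrt (E lam + ε) :=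
      Real.sqrt_le_sqrt (by linarith)
    have h2 : Real.sqrt (E lam₀ + ε) ≤ Real.sqrt (E lam₀) + Real.sqrt ε := by
      have hsq : E lam₀ + ε ≤ (Real.sqrt (E lam₀) + Real.sqrt ε) ^ 2 := by
        have ha := Real.sq_sqrt (hEnn lam₀)
        have hb := Real.sq_sqrt hεpos.le
        nlinarith [Real.sqrt_nonneg (E lam₀), Real.sqrt_nonneg ε]
      calc Real.sqrt (E lam₀ + ε)
          ≤ Real.sqrt ((Real.sqrt (E lam₀) + Real.sqrt ε) ^ 2) := Real.sqrt_le_sqrt hsq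
        _ = Real.sqrt (E lam₀) + Real.sqrt ε := Real.sqrt_sq (by positivity)
    have h3 : Real.sqrt ε = δ / Real.exp CS := Real.sqrt_sq (by positivity)
    calc Real.sqrt (E lam) ≤ Real.exp CS * (Real.sqrt (E lam₀ + ε) + Fe lam) := h1.trans h
      _ ≤ Real.exp CS * (Real.sqrt (E lam₀) + Real.sqrt ε + Fe lam) := by
          refine mul_le_mul_of_nonneg_left (by linarith) hexppos.le
      _ = Real.exp CS * (Real.sqrt (E lam₀) + Fe lam) + Real.exp CS * Real.sqrt ε := by ring
      _ = Real.exp CS * (Real.sqrt (E lam₀) + Fe lam) + δ := by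
          rw [h3]; field_simp
  -- final assembly
  have hb1 : |w' lam| ≤ Real.sqrt (E lam) :=
    Real.abs_le_sqrt (by simp only [hE]; nlinarith [sq_nonneg (w lam)])
  have hb2 : c * |w lam| ≤ Real.sqrt (E lam) := by
    refine Real.le_sqrt_of_sq_le ?_
    simp only [hE]; rw [mul_pow, sq_abs]; nlinarith [sq_nonneg (w' lam)]
  have hb0 : Real.sqrt (E lam₀) ≤ max 1 c * (|w lam₀| + |w' lam₀|) := by
    have hm1 : (1:ℝ) ≤ max 1 c := le_max_left _ _
    have hmc : c ≤ max 1 c := le_max_right _ _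
    have hsq : E lam₀ ≤ (max 1 c * (|w lam₀| + |w' lam₀|)) ^ 2 := by
      simp only [hE]
      nlinarith [sq_abs (w lam₀), sq_abs (w' lam₀),
        mul_nonneg (abs_nonneg (w lam₀)) (abs_nonneg (w' lam₀)),
        mul_le_mul hmc hmc hc.le (hc.le.trans hmc),
        mul_le_mul hm1 hm1 zero_le_one (hc.le.trans hmc),
        abs_nonneg (w lam₀), abs_nonneg (w' lam₀)]
    calc Real.sqrt (E lam₀)
        ≤ Real.sqrt ((max 1 c * (|w lam₀| + |w' lam₀|)) ^ 2) := Real.sqrt_le_sqrt hsq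
      _ = max 1 c * (|w lam₀| + |w' lam₀|) := Real.sqrt_sq (by positivity)
  rw [← hFeeq]
  have hFnn : 0 ≤ Fe lam := hFenn lam hlam
  have hM1 : (1:ℝ) ≤ max 1 c := le_max_left _ _
  have hchain : Real.sqrt (E lam) ≤ Real.exp CS * (max 1 c * (|w lam₀| + |w' lam₀| + Fe lam)) := by
    refine hmain0.trans (mul_le_mul_of_nonneg_left ?_ (Real.exp_pos CS).le)
    have : max 1 c * (|w lam₀| + |w' lam₀|) + Fe lam
        ≤ max 1 c * (|w lam₀| + |w' lam₀| + Fe lam) := by nlinarith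
    linarith [hb0]
  have hwle : |w lam| ≤ Real.sqrt (E lam) / c := by
    rw [le_div_iff₀ hc]; linarith [hb2, mul_comm c (|w lam|)]
  have hsum : |w lam| + |w' lam| ≤ (1 + 1/c) * Real.sqrt (E lam) := by
    have h := add_le_add hwle hb1
    have : (1 + 1/c) * Real.sqrt (E lam) = Real.sqrt (E lam) / c + Real.sqrt (E lam) := by
      field_simp; ring
    linarith
  calc |w lam| + |w' lam| ≤ (1 + 1/c) * Real.sqrt (E lam) := hsum
    _ ≤ (1 + 1/c) * (Real.exp CS * (max 1 c * (|w lam₀| + |w' lam₀| + Fe lam))) := by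
        refine mul_le_mul_of_nonneg_left hchain (by positivity)
    _ = (1 + 1/c) * max 1 c * Real.exp CS * (|w lam₀| + |w' lam₀| + Fe lam) := by ring
end
end

section
/- Hierarchical Grönwall lemma for the energy bootstrap (Appendix A): Let N ∈ ℕ, C ≥ 1, C₀ > 0, C₁ ≥ C₀, ε > 0, s₁ ≥ 2, and suppose C₁ε ≤ 1. Let a₀, a₁, …, a_N : [2,s₁] → [0,∞) be continuous functions such that for all s ∈ [2,s₁]: a₀(s) ≤ 2C₀ε + C(C₁ε)² + C·C₁ε ∫₂^s τ^{−1} a₀(τ) dτ, and for each 1 ≤ k ≤ N: a_k(s) ≤ 2C₀ε + C(C₁ε)² + C·C₁ε ∫₂^s τ^{−1} a_k(τ) dτ + C·C₁ε ∫₂^s τ^{−1 + C·C₁ε} a_{k−1}(τ) dτ. Then there exists a constant C′ depending only on C and N such that for all 0 ≤ k ≤ N and all s ∈ [2,s₁]: a_k(s) ≤ 2C₀ε + C′ (C₁ε)^{3/2} s^{C′ √(C₁ε)}. -/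
noncomputable section
open MeasureTheory

lemma exp_sub_one_le_aux {x : ℝ} (hx : 0 ≤ x) : Real.exp x - 1 ≤ x * Real.exp x := by
  have h1 : 1 - x ≤ Real.exp (-x) := by linarith [Real.add_one_le_exp (-x)]
  rw [Real.exp_neg] at h1
  have h2 : 0 < Real.exp x := Real.exp_pos x
  have h3 : Real.exp x * (Real.exp x)⁻¹ = 1 := mul_inv_cancel₀ (ne_of_gt h2)
  nlinarith

lemma log_le_rpow_div_aux {s t : ℝ} (hs : 1 ≤ s) (ht : 0 < t) :
    Real.log s ≤ s ^ t / t := by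
  have hs0 : 0 < s := by linarith
  have h1 : Real.log (s ^ t) = t * Real.log s := Real.log_rpow hs0 t
  have h2 : Real.log (s ^ t) ≤ s ^ t - 1 := Real.log_le_sub_one_of_pos (Real.rpow_pos_of_pos hs0 t)
  have h3 : (1:ℝ) ≤ s ^ t := Real.one_le_rpow hs ht.le
  rw [le_div_iff₀ ht]
  nlinarith [Real.log_nonneg hs]

lemma m32_eq_aux {m : ℝ} (hm : 0 ≤ m) : m ^ ((3:ℝ)/2) = Real.sqrt m ^ 3 := by
  rw [Real.sqrt_eq_rpow, ← Real.rpow_natCast (m ^ ((1:ℝ)/2)) 3, ← Real.rpow_mul hm]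
  norm_num

/-- key absorption inequality -/
lemma key1_aux {C m c₀ s : ℝ} (hC : 1 ≤ C) (hm : 0 < m) (hm1 : m ≤ 1)
    (hc₀ : 0 ≤ c₀) (hc₀2 : c₀ ≤ 2*m) (hs : 2 ≤ s) :
    c₀ * (s ^ (C*m) - 1) ≤ 2*C * m ^ ((3:ℝ)/2) * s ^ ((C+1) * Real.sqrt m) := by
  set t := Real.sqrt m with ht_def
  have ht : 0 < t := Real.sqrt_pos.mpr hm
  have ht1 : t ≤ 1 := by
    rw [ht_def, show (1:ℝ) = Real.sqrt 1 by simp]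
    exact Real.sqrt_le_sqrt hm1
  have hmt : m = t^2 := (Real.sq_sqrt hm.le).symm
  have hs0 : 0 < s := by linarith
  have hs1 : (1:ℝ) ≤ s := by linarith
  have hlog : 0 ≤ Real.log s := Real.log_nonneg hs1
  have hCm : 0 < C * m := by positivity
  -- s^(Cm) - 1 ≤ (C*m) * log s * s^(Cm)
  have h1 : s ^ (C*m) - 1 ≤ (C*m) * Real.log s * s ^ (C*m) := by
    have hrw : s ^ (C*m) = Real.exp (Real.log s * (C*m)) := Real.rpow_def_of_pos hs0 _
    rw [hrw]
    have := exp_sub_one_le_aux (x := Real.log s * (C*m)) (by positivity)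
    linarith [this]
  have h2 : Real.log s ≤ s ^ t / t := log_le_rpow_div_aux hs1 ht
  have h3 : s ^ (C*m) ≤ s ^ (C*t) := by
    apply Real.rpow_le_rpow_of_exponent_le hs1
    nlinarith
  have h4 : s ^ t * s ^ (C*t) = s ^ ((C+1)*t) := by
    rw [← Real.rpow_add hs0]; ring_nf
  have hst : 0 < s ^ t := Real.rpow_pos_of_pos hs0 t
  have hsCt : 0 < s ^ (C*t) := Real.rpow_pos_of_pos hs0 _
  have hsCm : 0 < s ^ (C*m) := Real.rpow_pos_of_pos hs0 _
  have hm32 : m ^ ((3:ℝ)/2) = t^3 := m32_eq_aux hm.le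
  calc c₀ * (s ^ (C*m) - 1) ≤ (2*m) * ((C*m) * Real.log s * s ^ (C*m)) := by
        apply mul_le_mul hc₀2 h1 _ (by linarith)
        · nlinarith [Real.one_le_rpow hs1 hCm.le]
    _ ≤ (2*m) * ((C*m) * (s^t/t) * s ^ (C*t)) := by
        gcongr
    _ = 2*C * m ^ ((3:ℝ)/2) * (s^t * s^(C*t)) := by
        rw [hm32, hmt]
        field_simp
    _ = 2*C * m ^ ((3:ℝ)/2) * s ^ ((C+1)*t) := by rw [h4]

/-- Integral Grönwall with weight 1/τ on [2, s₁]. -/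
lemma gronwall_A {s₁ L : ℝ} (a : ℝ → ℝ) (ha : Continuous a) (ha0 : ∀ x, 0 ≤ a x)
    (hL : 0 < L) (F : ℝ → ℝ)
    (hFmono : MonotoneOn F (Set.Icc 2 s₁)) (hF0 : ∀ s ∈ Set.Icc (2:ℝ) s₁, 0 ≤ F s)
    (h : ∀ s ∈ Set.Icc (2:ℝ) s₁, a s ≤ F s + L * ∫ τ in (2:ℝ)..s, τ⁻¹ * a τ) :
    ∀ s ∈ Set.Icc (2:ℝ) s₁, a s ≤ F s * (s/2) ^ L := by
  set w : ℝ → ℝ := fun τ => (max τ 2)⁻¹ * a τ with hw_def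
  have hw : Continuous w := by
    apply Continuous.mul _ ha
    apply Continuous.inv₀ (continuous_id.max continuous_const)
    intro τ; have : (2:ℝ) ≤ max τ 2 := le_max_right _ _
    positivity
  have hw0 : ∀ τ, 0 ≤ w τ := by
    intro τ
    have h2 : (0:ℝ) < max τ 2 := lt_of_lt_of_le (by norm_num) (le_max_right _ _)
    exact mul_nonneg (by positivity) (ha0 τ)
  have hcongr : ∀ s', 2 ≤ s' → (∫ τ in (2:ℝ)..s', w τ) = ∫ τ in (2:ℝ)..s', τ⁻¹ * a τ := by
    intro s' hs'
    apply intervalIntegral.integral_congr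
    intro τ hτ
    rw [Set.uIcc_of_le hs'] at hτ
    simp only [hw_def]
    rw [max_eq_left hτ.1]
  set g : ℝ → ℝ := fun u => ∫ τ in (2:ℝ)..(Real.exp u), w τ with hg_def
  have hg' : ∀ u, HasDerivAt g (Real.exp u * w (Real.exp u)) u := by
    intro u
    have h1 : HasDerivAt (fun v => ∫ τ in (2:ℝ)..v, w τ) (w (Real.exp u)) (Real.exp u) :=
      (hw.integral_hasStrictDerivAt 2 (Real.exp u)).hasDerivAt
    have h2 : HasDerivAt Real.exp (Real.exp u) u := Real.hasDerivAt_exp u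
    have := h1.comp u h2
    rw [mul_comm] at this; exact this
  have hgc : Continuous g := continuous_iff_continuousAt.mpr fun u => (hg' u).continuousAt
  intro s hs
  obtain ⟨hs2, hss₁⟩ := hs
  have hs0 : (0:ℝ) < s := by linarith
  have hlog2s : Real.log 2 ≤ Real.log s := Real.log_le_log (by norm_num) hs2
  have hexplog2 : Real.exp (Real.log 2) = 2 := Real.exp_log (by norm_num)
  have hexplogs : Real.exp (Real.log s) = s := Real.exp_log hs0
  have key := norm_le_gronwallBound_of_norm_deriv_right_le (f := g)
    (f' := fun u => Real.exp u * w (Real.exp u)) (δ := 0) (K := L) (ε := F s)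
    (a := Real.log 2) (b := Real.log s)
    (hgc.continuousOn)
    (fun u _ => (hg' u).hasDerivWithinAt)
    (by rw [hg_def]; simp only; rw [hexplog2, intervalIntegral.integral_same, norm_zero])
    ?_ (Real.log s) (Set.right_mem_Icc.mpr hlog2s)
  · -- use the conclusion
    have hInt := h s ⟨hs2, hss₁⟩
    have hgs : g (Real.log s) = ∫ τ in (2:ℝ)..s, τ⁻¹ * a τ := by
      rw [hg_def]; simp only; rw [hexplogs]; exact hcongr s hs2
    have hb : gronwallBound 0 L (F s) (Real.log s - Real.log 2)
        = F s / L * ((s/2) ^ L - 1) := by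
      rw [gronwallBound_of_K_ne_0 (ne_of_gt hL)]
      simp only [zero_mul, zero_add]
      congr 2
      rw [← Real.log_div (ne_of_gt hs0) (by norm_num), Real.rpow_def_of_pos (by linarith : (0:ℝ) < s/2), mul_comm]
    rw [hb] at key
    have hgle : g (Real.log s) ≤ F s / L * ((s/2) ^ L - 1) :=
      le_trans (le_abs_self _) key
    have hFs : 0 ≤ F s := hF0 s ⟨hs2, hss₁⟩
    have hA1 : (1:ℝ) ≤ (s/2) ^ L := Real.one_le_rpow (by linarith) hL.le
    have : L * g (Real.log s) ≤ F s * ((s/2)^L - 1) := by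
      have := mul_le_mul_of_nonneg_left hgle hL.le
      calc L * g (Real.log s) ≤ L * (F s / L * ((s/2) ^ L - 1)) := this
        _ = F s * ((s/2)^L - 1) := by field_simp
    rw [← hgs] at hInt
    nlinarith
  · -- the derivative bound
    intro u hu
    have hu2 : (2:ℝ) ≤ Real.exp u := by
      rw [← hexplog2]; exact Real.exp_le_exp.mpr hu.1
    have hus : Real.exp u ≤ s := by
      rw [← hexplogs]; exact Real.exp_le_exp.mpr hu.2.le
    have hmem : Real.exp u ∈ Set.Icc (2:ℝ) s₁ := ⟨hu2, le_trans hus hss₁⟩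
    have hval : Real.exp u * w (Real.exp u) = a (Real.exp u) := by
      simp only [hw_def]
      rw [max_eq_left hu2]
      field_simp
    rw [hval]
    have hg0 : 0 ≤ g u := by
      rw [hg_def]
      exact intervalIntegral.integral_nonneg (by linarith) (fun τ _ => hw0 τ)
    have hnorm : ‖g u‖ = g u := Real.norm_of_nonneg hg0
    have hanorm : ‖a (Real.exp u)‖ = a (Real.exp u) := Real.norm_of_nonneg (ha0 _)
    rw [hnorm, hanorm]
    have h1 := h _ hmem
    have h2 : F (Real.exp u) ≤ F s := hFmono hmem ⟨hs2, hss₁⟩ hus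
    have h3 : (∫ τ in (2:ℝ)..(Real.exp u), τ⁻¹ * a τ) = g u := (hcongr _ hu2).symm
    rw [h3] at h1
    linarith

/-- One absorption step. -/
lemma absorb_aux {C m c₀ K θ s₁ : ℝ} (hC : 1 ≤ C) (hm : 0 < m) (hm1 : m ≤ 1)
    (hc₀ : 0 ≤ c₀) (hc₀2 : c₀ ≤ 2*m) (hK : 0 ≤ K) (hθ : 0 ≤ θ)
    (a : ℝ → ℝ) (ha : Continuous a) (ha0 : ∀ x, 0 ≤ a x)
    (h : ∀ s ∈ Set.Icc (2:ℝ) s₁, a s ≤ c₀ + C * m^2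
        + K * m ^ ((3:ℝ)/2) * s ^ (θ * Real.sqrt m)
        + C * m * ∫ τ in (2:ℝ)..s, τ⁻¹ * a τ) :
    ∀ s ∈ Set.Icc (2:ℝ) s₁, a s ≤ c₀ + (3*C + K) * m ^ ((3:ℝ)/2)
        * s ^ ((θ + C + 1) * Real.sqrt m) := by
  set t := Real.sqrt m with ht_def
  have ht : 0 < t := Real.sqrt_pos.mpr hm
  have ht1 : t ≤ 1 := by
    rw [ht_def, show (1:ℝ) = Real.sqrt 1 by simp]
    exact Real.sqrt_le_sqrt hm1
  have hm32 : 0 ≤ m ^ ((3:ℝ)/2) := Real.rpow_nonneg hm.le _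
  have hm_le_t : m ≤ t := by nlinarith [Real.sq_sqrt hm.le]
  set F : ℝ → ℝ := fun s => c₀ + C*m^2 + K * m ^ ((3:ℝ)/2) * s ^ (θ * t) with hF_def
  have hFmono : MonotoneOn F (Set.Icc 2 s₁) := by
    intro x hx y hy hxy
    simp only [hF_def]
    have h1 : x ^ (θ*t) ≤ y ^ (θ*t) :=
      Real.rpow_le_rpow (by linarith [hx.1]) hxy (by positivity)
    have := mul_le_mul_of_nonneg_left h1 (mul_nonneg hK hm32)
    linarith
  have hF0 : ∀ s ∈ Set.Icc (2:ℝ) s₁, 0 ≤ F s := by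
    intro s hs
    have : (0:ℝ) ≤ s ^ (θ*t) := Real.rpow_nonneg (by linarith [hs.1]) _
    simp only [hF_def]
    have : 0 ≤ K * m ^ ((3:ℝ)/2) * s ^ (θ*t) := by positivity
    nlinarith
  have hmain := gronwall_A a ha ha0 (by positivity : (0:ℝ) < C*m) F hFmono hF0
    (fun s hs => h s hs)
  intro s hs
  obtain ⟨hs2, hss₁⟩ := hs
  have hs0 : (0:ℝ) < s := by linarith
  have hs1 : (1:ℝ) ≤ s := by linarith
  have hthis := hmain s ⟨hs2, hss₁⟩
  set A := (s/2) ^ (C*m) with hA_def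
  have hA1 : (1:ℝ) ≤ A := Real.one_le_rpow (by linarith) (by positivity)
  have hA_le : A ≤ s ^ (C*t) := by
    calc A ≤ s ^ (C*m) := Real.rpow_le_rpow (by linarith) (by linarith) (by positivity)
      _ ≤ s ^ (C*t) := Real.rpow_le_rpow_of_exponent_le hs1 (by nlinarith)
  have hAsm : A ≤ s ^ (C*m) := Real.rpow_le_rpow (by linarith) (by linarith) (by positivity)
  set P := s ^ ((θ + C + 1) * t) with hP_def
  have hP0 : 0 ≤ P := Real.rpow_nonneg hs0.le _
  have hP1 : s ^ ((C+1)*t) ≤ P := Real.rpow_le_rpow_of_exponent_le hs1 (by nlinarith)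
  have hP2 : s ^ ((θ+C)*t) ≤ P := Real.rpow_le_rpow_of_exponent_le hs1 (by nlinarith)
  have hP3 : s ^ (C*t) ≤ P := Real.rpow_le_rpow_of_exponent_le hs1 (by nlinarith)
  -- piece 1 : c₀ * A
  have h1 : c₀ * A ≤ c₀ + 2*C * m ^ ((3:ℝ)/2) * P := by
    have k1 := key1_aux hC hm hm1 hc₀ hc₀2 hs2
    have e1 : c₀ * A ≤ c₀ * s ^ (C*m) := mul_le_mul_of_nonneg_left hAsm hc₀
    have h2C : (0:ℝ) ≤ 2*C*m^((3:ℝ)/2) := by positivity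
    have e2 : 2*C*m^((3:ℝ)/2) * s ^ ((C+1)*t) ≤ 2*C*m^((3:ℝ)/2) * P :=
      mul_le_mul_of_nonneg_left hP1 h2C
    have e3 : c₀ * s ^ (C*m) = c₀ + c₀ * (s ^ (C*m) - 1) := by ring
    linarith
  -- piece 2 : C*m^2 * A
  have h2 : C*m^2 * A ≤ C * m ^ ((3:ℝ)/2) * P := by
    have hm2 : m^2 ≤ m ^ ((3:ℝ)/2) := by
      have : m ^ ((2:ℕ):ℝ) = m^2 := Real.rpow_natCast m 2
      rw [← this]
      exact Real.rpow_le_rpow_of_exponent_ge hm hm1 (by norm_num)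
    calc C*m^2*A ≤ C * m ^ ((3:ℝ)/2) * s ^ (C*t) := by
          apply mul_le_mul _ hA_le (by linarith) (by positivity)
          nlinarith
      _ ≤ C * m ^ ((3:ℝ)/2) * P := by
          apply mul_le_mul_of_nonneg_left hP3 (by positivity)
  -- piece 3 : K * m^{3/2} * s^{θt} * A
  have h3 : K * m ^ ((3:ℝ)/2) * s ^ (θ*t) * A ≤ K * m ^ ((3:ℝ)/2) * P := by
    have : s ^ (θ*t) * A ≤ s ^ ((θ+C)*t) := by
      calc s ^ (θ*t) * A ≤ s ^ (θ*t) * s ^ (C*t) :=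
            mul_le_mul_of_nonneg_left hA_le (Real.rpow_nonneg hs0.le _)
        _ = s ^ ((θ+C)*t) := by rw [← Real.rpow_add hs0]; ring_nf
    calc K * m ^ ((3:ℝ)/2) * s ^ (θ*t) * A = K * m ^ ((3:ℝ)/2) * (s ^ (θ*t) * A) := by ring
      _ ≤ K * m ^ ((3:ℝ)/2) * s ^ ((θ+C)*t) := by
          apply mul_le_mul_of_nonneg_left this (by positivity)
      _ ≤ K * m ^ ((3:ℝ)/2) * P := mul_le_mul_of_nonneg_left hP2 (by positivity)
  calc a s ≤ F s * A := hthis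
    _ = c₀ * A + C*m^2*A + K * m ^ ((3:ℝ)/2) * s ^ (θ*t) * A := by
        simp only [hF_def]; ring
    _ ≤ c₀ + (3*C + K) * m ^ ((3:ℝ)/2) * P := by linarith

/-- monotone bump of the bound -/
lemma bump_aux {m c₀ E E' s x : ℝ} (hm : 0 ≤ m) (hs : 1 ≤ s) (hE0 : 0 ≤ E) (hEE' : E ≤ E')
    (h : x ≤ c₀ + E * m ^ ((3:ℝ)/2) * s ^ (E * Real.sqrt m)) :
    x ≤ c₀ + E' * m ^ ((3:ℝ)/2) * s ^ (E' * Real.sqrt m) := by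
  refine h.trans ?_
  have h1 : s ^ (E * Real.sqrt m) ≤ s ^ (E' * Real.sqrt m) :=
    Real.rpow_le_rpow_of_exponent_le hs
      (mul_le_mul_of_nonneg_right hEE' (Real.sqrt_nonneg m))
  have h2 : (0:ℝ) ≤ m ^ ((3:ℝ)/2) := Real.rpow_nonneg hm _
  have h3 : (0:ℝ) ≤ s ^ (E * Real.sqrt m) := Real.rpow_nonneg (by linarith) _
  have h4 : E * m ^ ((3:ℝ)/2) * s ^ (E * Real.sqrt m)
      ≤ E' * m ^ ((3:ℝ)/2) * s ^ (E' * Real.sqrt m) := by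
    apply mul_le_mul (by nlinarith) h1 h3 (by nlinarith)
  linarith

set_option maxHeartbeats 1000000 in
/-- coupling integral estimate -/
lemma coupling_aux {C m c₀ E s₁ : ℝ} (hC : 1 ≤ C) (hm : 0 < m) (hm1 : m ≤ 1)
    (hc₀ : 0 ≤ c₀) (hc₀2 : c₀ ≤ 2*m) (hE : 3*C ≤ E)
    (aprev : ℝ → ℝ) (hap : Continuous aprev) (hap0 : ∀ x, 0 ≤ aprev x)
    (hprev : ∀ s ∈ Set.Icc (2:ℝ) s₁, aprev s ≤ c₀ + E * m ^ ((3:ℝ)/2) * s ^ (E * Real.sqrt m)) :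
    ∀ s ∈ Set.Icc (2:ℝ) s₁,
      C * m * (∫ τ in (2:ℝ)..s, τ ^ (-1 + C*m) * aprev τ)
        ≤ 3*C * m ^ ((3:ℝ)/2) * s ^ ((C + E) * Real.sqrt m) := by
  set t := Real.sqrt m with ht_def
  have ht : 0 < t := Real.sqrt_pos.mpr hm
  have ht1 : t ≤ 1 := by
    rw [ht_def, show (1:ℝ) = Real.sqrt 1 by simp]
    exact Real.sqrt_le_sqrt hm1
  have hmt : m = t^2 := (Real.sq_sqrt hm.le).symm
  have hm_le_t : m ≤ t := by nlinarith
  have hE1 : (1:ℝ) ≤ E := by linarith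
  have hm32 : 0 ≤ m ^ ((3:ℝ)/2) := Real.rpow_nonneg hm.le _
  have hm32t : m ^ ((3:ℝ)/2) = t^3 := m32_eq_aux hm.le
  set D := E * m ^ ((3:ℝ)/2) with hD_def
  have hD0 : 0 ≤ D := by positivity
  intro s hs
  obtain ⟨hs2, hss₁⟩ := hs
  have hs0 : (0:ℝ) < s := by linarith
  have hs1 : (1:ℝ) ≤ s := by linarith
  have huIcc : Set.uIcc (2:ℝ) s = Set.Icc 2 s := Set.uIcc_of_le hs2
  -- continuity of the various integrands on [2,s]
  have hrpowC : ∀ (r : ℝ), ContinuousOn (fun τ : ℝ => τ ^ r) (Set.Icc (2:ℝ) s) := by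
    intro r
    apply ContinuousOn.rpow_const continuousOn_id
    intro x hx
    exact Or.inl (by simp at hx ⊢; linarith [hx.1])
  have hint1 : IntervalIntegrable (fun τ => τ ^ (-1 + C*m) * aprev τ) volume 2 s := by
    apply ContinuousOn.intervalIntegrable
    rw [huIcc]
    exact (hrpowC _).mul hap.continuousOn
  have hint2 : IntervalIntegrable (fun τ => τ ^ (-1 + C*m) * (c₀ + D * τ ^ (E*t))) volume 2 s := by
    apply ContinuousOn.intervalIntegrable
    rw [huIcc]
    exact (hrpowC _).mul (continuousOn_const.add (continuousOn_const.mul (hrpowC _)))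
  have hint3 : IntervalIntegrable (fun τ => c₀ * τ ^ (-1 + C*m)) volume 2 s := by
    apply ContinuousOn.intervalIntegrable
    rw [huIcc]
    exact continuousOn_const.mul (hrpowC _)
  have hint4 : IntervalIntegrable (fun τ => D * τ ^ (-1 + C*m + E*t)) volume 2 s := by
    apply ContinuousOn.intervalIntegrable
    rw [huIcc]
    exact continuousOn_const.mul (hrpowC _)
  -- step 1: pointwise bound
  have step1 : (∫ τ in (2:ℝ)..s, τ ^ (-1 + C*m) * aprev τ)
      ≤ ∫ τ in (2:ℝ)..s, τ ^ (-1 + C*m) * (c₀ + D * τ ^ (E*t)) := by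
    apply intervalIntegral.integral_mono_on hs2 hint1 hint2
    intro τ hτ
    have hτ0 : (0:ℝ) < τ := by linarith [hτ.1]
    apply mul_le_mul_of_nonneg_left _ (Real.rpow_nonneg hτ0.le _)
    exact hprev τ ⟨hτ.1, le_trans hτ.2 hss₁⟩
  -- step 2: split the integral
  have step2 : (∫ τ in (2:ℝ)..s, τ ^ (-1 + C*m) * (c₀ + D * τ ^ (E*t)))
      = (∫ τ in (2:ℝ)..s, c₀ * τ ^ (-1 + C*m)) + ∫ τ in (2:ℝ)..s, D * τ ^ (-1 + C*m + E*t) := by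
    rw [← intervalIntegral.integral_add hint3 hint4]
    apply intervalIntegral.integral_congr
    intro τ hτ
    rw [huIcc] at hτ
    have hτ0 : (0:ℝ) < τ := by linarith [hτ.1]
    have : τ ^ (-1 + C*m + E*t) = τ ^ (-1 + C*m) * τ ^ (E*t) := Real.rpow_add hτ0 _ _
    simp only [this]
    ring
  -- step 3: compute the two integrals
  have hCm0 : (0:ℝ) < C * m := by positivity
  have hexp1 : (-1 + C*m) + 1 = C*m := by ring
  have val1 : (∫ τ in (2:ℝ)..s, c₀ * τ ^ (-1 + C*m)) = c₀ * ((s ^ (C*m) - 2 ^ (C*m)) / (C*m)) := by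
    rw [intervalIntegral.integral_const_mul]
    rw [integral_rpow (Or.inl (by linarith))]
    rw [hexp1]
  have hexp2 : (-1 + C*m + E*t) + 1 = C*m + E*t := by ring
  have val2 : (∫ τ in (2:ℝ)..s, D * τ ^ (-1 + C*m + E*t))
      = D * ((s ^ (C*m + E*t) - 2 ^ (C*m + E*t)) / (C*m + E*t)) := by
    rw [intervalIntegral.integral_const_mul]
    rw [integral_rpow (Or.inl (by nlinarith))]
    rw [hexp2]
  -- step 4: bound first piece
  have h2pow1 : (1:ℝ) ≤ (2:ℝ) ^ (C*m) := Real.one_le_rpow (by norm_num) hCm0.le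
  have piece1 : C * m * (c₀ * ((s ^ (C*m) - 2 ^ (C*m)) / (C*m)))
      ≤ 2*C * m ^ ((3:ℝ)/2) * s ^ ((C+1)*t) := by
    have he : C * m * (c₀ * ((s ^ (C*m) - 2 ^ (C*m)) / (C*m))) = c₀ * (s ^ (C*m) - 2 ^ (C*m)) := by
      field_simp
    rw [he]
    have k1 : c₀ * (s ^ (C*m) - 1) ≤ 2*C * m ^ ((3:ℝ)/2) * s ^ ((C+1) * t) := by
      rw [ht_def]; exact key1_aux hC hm hm1 hc₀ hc₀2 hs2
    have : c₀ * (s ^ (C*m) - 2 ^ (C*m)) ≤ c₀ * (s ^ (C*m) - 1) := by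
      apply mul_le_mul_of_nonneg_left _ hc₀
      linarith
    linarith
  -- step 5: bound second piece
  have hden : 0 < C*m + E*t := by positivity
  have hEt : 0 < E * t := by positivity
  have piece2 : C * m * (D * ((s ^ (C*m + E*t) - 2 ^ (C*m + E*t)) / (C*m + E*t)))
      ≤ C * m ^ ((3:ℝ)/2) * s ^ ((C+E)*t) := by
    have h2p : (0:ℝ) ≤ (2:ℝ) ^ (C*m + E*t) := Real.rpow_nonneg (by norm_num) _
    have hsp0 : (0:ℝ) ≤ s ^ (C*m + E*t) := Real.rpow_nonneg hs0.le _
    have hstep : C * m * (D * ((s ^ (C*m + E*t) - 2 ^ (C*m + E*t)) / (C*m + E*t)))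
        ≤ C * m * (D * (s ^ (C*m + E*t) / (E*t))) := by
      gcongr
      · linarith
      · nlinarith
    refine hstep.trans ?_
    have heq : C * m * (D * (s ^ (C*m + E*t) / (E*t)))
        = C * t * (m ^ ((3:ℝ)/2) * s ^ (C*m+E*t)) := by
      rw [hD_def, hm32t]
      rw [hmt]
      field_simp
    rw [heq]
    have hsX : s ^ (C*m + E*t) ≤ s ^ ((C+E)*t) := by
      apply Real.rpow_le_rpow_of_exponent_le hs1
      have : C*m ≤ C*t := mul_le_mul_of_nonneg_left hm_le_t (by linarith)
      linarith
    calc C * t * (m ^ ((3:ℝ)/2) * s ^ (C*m+E*t))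
        ≤ C * 1 * (m ^ ((3:ℝ)/2) * s ^ ((C+E)*t)) := by
          apply mul_le_mul (by nlinarith [mul_le_mul_of_nonneg_left ht1 (le_of_lt (by linarith : (0:ℝ) < C))]) (mul_le_mul_of_nonneg_left hsX hm32) (by positivity) (by linarith)
      _ = C * m ^ ((3:ℝ)/2) * s ^ ((C+E)*t) := by ring
  -- assemble
  calc C * m * (∫ τ in (2:ℝ)..s, τ ^ (-1 + C*m) * aprev τ)
      ≤ C * m * ((∫ τ in (2:ℝ)..s, c₀ * τ ^ (-1 + C*m))
          + ∫ τ in (2:ℝ)..s, D * τ ^ (-1 + C*m + E*t)) := by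
        rw [← step2]; exact mul_le_mul_of_nonneg_left step1 (by positivity)
    _ = C * m * (c₀ * ((s ^ (C*m) - 2 ^ (C*m)) / (C*m)))
        + C * m * (D * ((s ^ (C*m+E*t) - 2 ^ (C*m+E*t)) / (C*m+E*t))) := by
        rw [val1, val2]; ring
    _ ≤ 2*C * m ^ ((3:ℝ)/2) * s ^ ((C+1)*t) + C * m ^ ((3:ℝ)/2) * s ^ ((C+E)*t) :=
        add_le_add piece1 piece2
    _ ≤ 3*C * m ^ ((3:ℝ)/2) * s ^ ((C+E)*t) := by
        have hmon : s ^ ((C+1)*t) ≤ s ^ ((C+E)*t) :=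
          Real.rpow_le_rpow_of_exponent_le hs1 (by nlinarith)
        have := mul_le_mul_of_nonneg_left hmon (by positivity : (0:ℝ) ≤ 2*C*m^((3:ℝ)/2))
        linarith

/-- the inductive step -/
lemma step_aux {C m c₀ E s₁ : ℝ} (hC : 1 ≤ C) (hm : 0 < m) (hm1 : m ≤ 1)
    (hc₀ : 0 ≤ c₀) (hc₀2 : c₀ ≤ 2*m) (hE : 3*C ≤ E)
    (aprev acur : ℝ → ℝ) (hap : Continuous aprev) (hap0 : ∀ x, 0 ≤ aprev x)
    (hac : Continuous acur) (hac0 : ∀ x, 0 ≤ acur x)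
    (hprev : ∀ s ∈ Set.Icc (2:ℝ) s₁, aprev s ≤ c₀ + E * m ^ ((3:ℝ)/2) * s ^ (E * Real.sqrt m))
    (h : ∀ s ∈ Set.Icc (2:ℝ) s₁, acur s ≤ c₀ + C * m^2
        + C * m * (∫ τ in (2:ℝ)..s, τ⁻¹ * acur τ)
        + C * m * ∫ τ in (2:ℝ)..s, τ ^ (-1 + C*m) * aprev τ) :
    ∀ s ∈ Set.Icc (2:ℝ) s₁, acur s ≤ c₀ + (E + 3*C) * m ^ ((3:ℝ)/2)
        * s ^ ((E + 3*C) * Real.sqrt m) := by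
  have hcoup := coupling_aux hC hm hm1 hc₀ hc₀2 hE aprev hap hap0 hprev
  have habs := absorb_aux (K := 3*C) (θ := C+E) (s₁ := s₁) hC hm hm1 hc₀ hc₀2
    (by linarith) (by linarith) acur hac hac0 ?_
  · intro s hs
    have hb := habs s hs
    have hs1 : (1:ℝ) ≤ s := by linarith [hs.1]
    have hm32 : (0:ℝ) ≤ m ^ ((3:ℝ)/2) := Real.rpow_nonneg hm.le _
    have hX0 : (0:ℝ) ≤ s ^ ((C + E + C + 1) * Real.sqrt m) := Real.rpow_nonneg (by linarith) _
    have hXY : s ^ ((C + E + C + 1) * Real.sqrt m) ≤ s ^ ((E + 3*C) * Real.sqrt m) := by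
      apply Real.rpow_le_rpow_of_exponent_le hs1
      apply mul_le_mul_of_nonneg_right (by linarith) (Real.sqrt_nonneg m)
    have hcoef : 3*C + 3*C ≤ E + 3*C := by linarith
    calc acur s ≤ c₀ + (3*C + 3*C) * m ^ ((3:ℝ)/2) * s ^ ((C + E + C + 1) * Real.sqrt m) := hb
      _ ≤ c₀ + (E + 3*C) * m ^ ((3:ℝ)/2) * s ^ ((C + E + C + 1) * Real.sqrt m) := by
          have := mul_le_mul_of_nonneg_right (mul_le_mul_of_nonneg_right hcoef hm32) hX0
          linarith
      _ ≤ c₀ + (E + 3*C) * m ^ ((3:ℝ)/2) * s ^ ((E + 3*C) * Real.sqrt m) := by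
          have hc2 : (0:ℝ) ≤ (E + 3*C) * m ^ ((3:ℝ)/2) := by nlinarith
          have := mul_le_mul_of_nonneg_left hXY hc2
          linarith
  · intro s hs
    have h1 := h s hs
    have h2 := hcoup s hs
    linarith

/-- coefficient/exponent bump -/
lemma bump2_aux {m c₀ K θ E' s x : ℝ} (hm : 0 ≤ m) (hs : 1 ≤ s) (hK : 0 ≤ K)
    (hKE : K ≤ E') (hθE : θ ≤ E')
    (h : x ≤ c₀ + K * m ^ ((3:ℝ)/2) * s ^ (θ * Real.sqrt m)) :
    x ≤ c₀ + E' * m ^ ((3:ℝ)/2) * s ^ (E' * Real.sqrt m) := by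
  refine h.trans ?_
  have h1 : s ^ (θ * Real.sqrt m) ≤ s ^ (E' * Real.sqrt m) :=
    Real.rpow_le_rpow_of_exponent_le hs
      (mul_le_mul_of_nonneg_right hθE (Real.sqrt_nonneg m))
  have h2 : (0:ℝ) ≤ m ^ ((3:ℝ)/2) := Real.rpow_nonneg hm _
  have h3 : (0:ℝ) ≤ s ^ (θ * Real.sqrt m) := Real.rpow_nonneg (by linarith) _
  have h4 : K * m ^ ((3:ℝ)/2) * s ^ (θ * Real.sqrt m)
      ≤ E' * m ^ ((3:ℝ)/2) * s ^ (E' * Real.sqrt m) := by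
    apply mul_le_mul (mul_le_mul_of_nonneg_right hKE h2) h1 h3 (by nlinarith)
  linarith

/-- Hierarchical Grönwall lemma for the energy bootstrap (Appendix A). -/
theorem stmt_15 : ∀ (N : ℕ) (C : ℝ), 1 ≤ C → ∃ C' > (0:ℝ),
    ∀ (C₀ C₁ ε s₁ : ℝ) (a : ℕ → ℝ → ℝ),
      0 < C₀ → C₀ ≤ C₁ → 0 < ε → 2 ≤ s₁ → C₁ * ε ≤ 1 →
      (∀ k ≤ N, ContinuousOn (a k) (Set.Icc 2 s₁)) →
      (∀ k ≤ N, ∀ s ∈ Set.Icc (2:ℝ) s₁, 0 ≤ a k s) →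
      (∀ s ∈ Set.Icc (2:ℝ) s₁,
        a 0 s ≤ 2 * C₀ * ε + C * (C₁ * ε) ^ 2
          + C * C₁ * ε * ∫ τ in (2:ℝ)..s, τ⁻¹ * a 0 τ) →
      (∀ k, 1 ≤ k → k ≤ N → ∀ s ∈ Set.Icc (2:ℝ) s₁,
        a k s ≤ 2 * C₀ * ε + C * (C₁ * ε) ^ 2
          + C * C₁ * ε * (∫ τ in (2:ℝ)..s, τ⁻¹ * a k τ)
          + C * C₁ * ε * ∫ τ in (2:ℝ)..s, τ ^ (-1 + C * C₁ * ε) * a (k - 1) τ) →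
      ∀ k ≤ N, ∀ s ∈ Set.Icc (2:ℝ) s₁,
        a k s ≤ 2 * C₀ * ε
          + C' * (C₁ * ε) ^ ((3:ℝ)/2) * s ^ (C' * Real.sqrt (C₁ * ε)) := by
  intro N C hC
  have hN0 : (0:ℝ) ≤ (N:ℝ) := Nat.cast_nonneg N
  refine ⟨4*C + 3*C*N, by nlinarith, ?_⟩
  intro C₀ C₁ ε s₁ a hC₀ hC₀₁ hε hs₁ hm1 hcont hnn h0 h1
  set m := C₁ * ε with hm_def
  have hm : 0 < m := by rw [hm_def]; nlinarith
  have hCm_rw : C * C₁ * ε = C * m := by rw [hm_def]; ring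
  rw [hCm_rw] at h0
  simp only [hCm_rw] at h1
  have hc₀ : (0:ℝ) ≤ 2 * C₀ * ε := by nlinarith
  have hc₀2 : 2 * C₀ * ε ≤ 2 * m := by rw [hm_def]; nlinarith
  -- extension of a to ℝ
  set b : ℕ → ℝ → ℝ := fun j x => a j (Set.projIcc 2 s₁ hs₁ x) with hb_def
  have hbeq : ∀ j, ∀ x ∈ Set.Icc (2:ℝ) s₁, b j x = a j x := by
    intro j x hx
    rw [hb_def]; simp only
    rw [Set.projIcc_of_mem hs₁ hx]
  have hbcont : ∀ j ≤ N, Continuous (b j) := by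
    intro j hj
    exact (hcont j hj).restrict.comp continuous_projIcc
  have hb0 : ∀ j ≤ N, ∀ x, 0 ≤ b j x := by
    intro j hj x
    exact hnn j hj _ (Set.projIcc 2 s₁ hs₁ x).2
  have hIcongr1 : ∀ j, ∀ s ∈ Set.Icc (2:ℝ) s₁,
      (∫ τ in (2:ℝ)..s, τ⁻¹ * a j τ) = ∫ τ in (2:ℝ)..s, τ⁻¹ * b j τ := by
    intro j s hs
    apply intervalIntegral.integral_congr
    intro τ hτ
    rw [Set.uIcc_of_le hs.1] at hτ
    show τ⁻¹ * a j τ = τ⁻¹ * b j τ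
    rw [hbeq j τ ⟨hτ.1, le_trans hτ.2 hs.2⟩]
  have hIcongr2 : ∀ j, ∀ s ∈ Set.Icc (2:ℝ) s₁,
      (∫ τ in (2:ℝ)..s, τ ^ (-1 + C*m) * a j τ) = ∫ τ in (2:ℝ)..s, τ ^ (-1 + C*m) * b j τ := by
    intro j s hs
    apply intervalIntegral.integral_congr
    intro τ hτ
    rw [Set.uIcc_of_le hs.1] at hτ
    show τ ^ (-1 + C*m) * a j τ = τ ^ (-1 + C*m) * b j τ
    rw [hbeq j τ ⟨hτ.1, le_trans hτ.2 hs.2⟩]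
  -- main induction
  have hclaim : ∀ j, j ≤ N → ∀ s ∈ Set.Icc (2:ℝ) s₁,
      b j s ≤ 2*C₀*ε + (4*C + 3*C*j) * m ^ ((3:ℝ)/2) * s ^ ((4*C + 3*C*j) * Real.sqrt m) := by
    intro j
    induction j with
    | zero =>
      intro _
      have habs := absorb_aux (K := 0) (θ := 0) (s₁ := s₁) hC hm hm1 hc₀ hc₀2 le_rfl le_rfl
        (b 0) (hbcont 0 (Nat.zero_le N)) (hb0 0 (Nat.zero_le N)) ?_
      · intro s hs
        have hb' := habs s hs
        have hs1 : (1:ℝ) ≤ s := by linarith [hs.1]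
        push_cast
        apply bump2_aux hm.le hs1 (by linarith) (by linarith) (by linarith) hb'
      · intro s hs
        have hh := h0 s hs
        rw [hIcongr1 0 s hs] at hh
        rw [← hbeq 0 s hs] at hh
        simp only [zero_mul]
        linarith
    | succ j ih =>
      intro hj1
      have hjN : j ≤ N := Nat.le_of_succ_le hj1
      have hprev := ih hjN
      have hj0 : (0:ℝ) ≤ (j:ℝ) := Nat.cast_nonneg j
      have hstep := step_aux (E := 4*C + 3*C*j) (s₁ := s₁) hC hm hm1 hc₀ hc₀2
        (by nlinarith) (b j) (b (j+1)) (hbcont j hjN) (hb0 j hjN)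
        (hbcont (j+1) hj1) (hb0 (j+1) hj1) hprev ?_
      · intro s hs
        have hb' := hstep s hs
        have heq : (4*C + 3*C*(j:ℝ)) + 3*C = 4*C + 3*C*((j+1 : ℕ):ℝ) := by push_cast; ring
        rw [heq] at hb'
        exact hb'
      · intro s hs
        have hh := h1 (j+1) (Nat.succ_le_succ (Nat.zero_le j)) hj1 s hs
        simp only [Nat.add_sub_cancel] at hh
        rw [hIcongr1 (j+1) s hs, hIcongr2 j s hs, ← hbeq (j+1) s hs] at hh
        linarith
  -- conclusion
  intro k hk s hs
  have hclaimk := hclaim k hk s hs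
  rw [hbeq k s hs] at hclaimk
  have hs1 : (1:ℝ) ≤ s := by linarith [hs.1]
  have hk' : (k:ℝ) ≤ (N:ℝ) := Nat.cast_le.mpr hk
  have hj0 : (0:ℝ) ≤ (k:ℝ) := Nat.cast_nonneg k
  apply bump2_aux hm.le hs1 (by nlinarith) (by nlinarith) (by nlinarith) hclaimk
end
end
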